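/- arXiv:1702.06121 — 8 statements merged into one kernel-verified Lean document; each statement's English description precedes it below -/
import Mathlib

section
/- Let A = (a_1,…,a_{m1})^T ∈ {0,1}^{m1×n1} be the node-edge incidence matrix of a finite simple bipartite graph (rows indexed by vertices, columns by edges), and let H = (h_1,…,h_{m2})^T ∈ {0,1}^{m2×n1} be a binary matrix with the following two properties: (i) for every l ∈ [m2] there exists an index i ∈ [m1] with supp(h_l) ⊆ supp(a_i); (ii) for any two distinct rows h_i and h_l of H such that supp(h_i) ∪ supp(h_l) ⊆ supp(a_k) for some k ∈ [m1], one has supp(h_i) ∩ supp(h_l) = ∅. Then the (m1+m2)×n1 matrix obtained by stacking A on top of H is totally unimodular. -/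
private lemma sign_range_of_eq {d : ℤ} (h : d = -1 ∨ d = 0 ∨ d = 1) :
    d ∈ Set.range (SignType.cast : SignType → ℤ) := by
  rcases h with h | h | h
  · exact ⟨-1, by simp [h]⟩
  · exact ⟨0, by simp [h]⟩
  · exact ⟨1, by simp [h]⟩

private lemma bip_det : ∀ (k : ℕ) (M : Matrix (Fin k) (Fin k) ℤ) (P : Fin k → Prop),
    (∀ i j, M i j = 0 ∨ M i j = 1) →
    (∀ j i i', P i → P i' → M i j = 1 → M i' j = 1 → i = i') →
    (∀ j i i', ¬P i → ¬P i' → M i j = 1 → M i' j = 1 → i = i') →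
    M.det = -1 ∨ M.det = 0 ∨ M.det = 1 := by
  intro k
  induction k with
  | zero =>
    intro M P _ _ _
    right; right; exact Matrix.det_fin_zero
  | succ n ih =>
    intro M P h01 hP hQ
    classical
    by_cases hall : ∀ j, (∃ i, P i ∧ M i j = 1) ∧ (∃ i, ¬P i ∧ M i j = 1)
    · right; left
      rw [← Matrix.exists_vecMul_eq_zero_iff]
      refine ⟨fun i => if P i then 1 else -1, ?_, ?_⟩
      · intro hcon
        have := congrFun hcon 0
        by_cases h0 : P 0 <;> simp [h0] at this
      · funext j
        obtain ⟨⟨p, hp, hp1⟩, ⟨q, hq, hq1⟩⟩ := hall j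
        have hpq : p ≠ q := fun h => hq (h ▸ hp)
        show ∑ i, (if P i then (1:ℤ) else -1) * M i j = 0
        have hzero : ∀ i ∈ Finset.univ, i ∉ ({p, q} : Finset (Fin (n+1))) →
            (if P i then (1:ℤ) else -1) * M i j = 0 := by
          intro i _ hi
          simp only [Finset.mem_insert, Finset.mem_singleton, not_or] at hi
          rcases h01 i j with h | h
          · simp [h]
          · by_cases hPi : P i
            · exact absurd (hP j i p hPi hp h hp1) hi.1
            · exact absurd (hQ j i q hPi hq h hq1) hi.2
        rw [← Finset.sum_subset (Finset.subset_univ ({p, q} : Finset (Fin (n+1)))) hzero,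
          Finset.sum_pair hpq]
        simp [hp, hq, hp1, hq1]
    · push_neg at hall
      obtain ⟨j0, hj0⟩ := hall
      by_cases hz : ∀ i, M i j0 = 0
      · right; left; exact Matrix.det_eq_zero_of_column_eq_zero j0 hz
      · push_neg at hz
        obtain ⟨i0, hi0ne⟩ := hz
        have hi01 : M i0 j0 = 1 := (h01 i0 j0).resolve_left hi0ne
        have huniq : ∀ i, M i j0 = 1 → i = i0 := by
          intro i hi1
          by_cases hPi0 : P i0
          · have hPi : P i := by
              by_contra hPi
              exact hj0 ⟨i0, hPi0, hi01⟩ i hPi hi1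
            exact hP j0 i i0 hPi hPi0 hi1 hi01
          · have hPi : ¬P i := by
              intro hPi
              exact hj0 ⟨i, hPi, hi1⟩ i0 hPi0 hi01
            exact hQ j0 i i0 hPi hPi0 hi1 hi01
        rw [Matrix.det_succ_column M j0]
        have hsum : (∑ i : Fin (n+1), (-1:ℤ)^((i:ℕ) + (j0:ℕ)) * M i j0 *
              (M.submatrix i.succAbove j0.succAbove).det)
            = (-1)^((i0:ℕ) + (j0:ℕ)) * (M.submatrix i0.succAbove j0.succAbove).det := by
          rw [Finset.sum_eq_single i0]
          · rw [hi01, mul_one]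
          · intro i _ hii0
            have : M i j0 = 0 := by
              rcases h01 i j0 with h | h
              · exact h
              · exact absurd (huniq i h) hii0
            rw [this]; ring
          · intro h; exact absurd (Finset.mem_univ i0) h
        rw [hsum]
        have hrec := ih (M.submatrix i0.succAbove j0.succAbove) (fun i => P (i0.succAbove i))
          (fun i j => h01 _ _)
          (fun j i i' h1 h2 h3 h4 => Fin.succAbove_right_injective (hP _ _ _ h1 h2 h3 h4))
          (fun j i i' h1 h2 h3 h4 => Fin.succAbove_right_injective (hQ _ _ _ h1 h2 h3 h4))
        rcases Nat.even_or_odd ((i0:ℕ) + (j0:ℕ)) with he | ho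
        · rw [he.neg_one_pow, one_mul]; exact hrec
        · rw [ho.neg_one_pow]
          rcases hrec with h | h | h
          · right; right; rw [h]; ring
          · right; left; rw [h]; ring
          · left; rw [h]; ring

private lemma det_one_sub_nilpotent {k : ℕ} (c : Matrix (Fin k) (Fin k) ℤ) (P : Fin k → Prop)
    (hc : ∀ r r', c r r' ≠ 0 → P r ∧ ¬P r') :
    (1 - c).det = 1 := by
  classical
  rw [Matrix.det_apply]
  rw [Finset.sum_eq_single (1 : Equiv.Perm (Fin k))]
  · have h1 : ∀ i : Fin k, (1 - c) ((1 : Equiv.Perm (Fin k)) i) i = 1 := by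
      intro i
      have hcii : c i i = 0 := by
        by_contra h
        exact (hc i i h).2 (hc i i h).1
      simp [Matrix.sub_apply, Matrix.one_apply, hcii]
    rw [Finset.prod_congr rfl (fun i _ => h1 i)]
    simp
  · intro σ _ hσ
    have hex : ∃ i, (1 - c) (σ i) i = 0 := by
      by_contra hno
      push_neg at hno
      have key : ∀ i, σ i ≠ i → P (σ i) ∧ ¬P i := by
        intro i hi
        refine hc _ _ ?_
        intro h
        apply hno i
        simp [Matrix.sub_apply, Matrix.one_apply_ne hi, h]
      obtain ⟨i0, hi0⟩ : ∃ i, σ i ≠ i := by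
        by_contra hid
        push_neg at hid
        exact hσ (Equiv.ext hid)
      have h2 : σ (σ i0) ≠ σ i0 := fun h => hi0 (σ.injective h)
      exact (key _ h2).2 (key _ hi0).1
    obtain ⟨i, hi⟩ := hex
    have hpr : (∏ x : Fin k, (1 - c) (σ x) x) = 0 :=
      Finset.prod_eq_zero (Finset.mem_univ i) hi
    rw [hpr, smul_zero]
  · intro h; exact absurd (Finset.mem_univ _) h



/-- If `A` is the node-edge incidence matrix of a finite simple bipartite graph
(encoded: entries in `{0,1}`, there is a vertex part `R1` such that every edge/column has exactly
one `1` in `R1` and exactly one `1` outside `R1`, and distinct edges have distinct columns),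
and `H` is a binary matrix such that (i) every row of `H` has support contained in the support of
some row of `A`, and (ii) any two distinct rows of `H` whose supports are both contained in the
support of a common row of `A` have disjoint supports, then the matrix obtained by stacking `A`
on top of `H` is totally unimodular. -/
theorem stmt0 (m1 m2 n1 : ℕ)
    (A : Matrix (Fin m1) (Fin n1) ℤ) (H : Matrix (Fin m2) (Fin n1) ℤ)
    (R1 : Set (Fin m1))
    (hA01 : ∀ i e, A i e = 0 ∨ A i e = 1)
    (hH01 : ∀ l j, H l j = 0 ∨ H l j = 1)
    (hbip1 : ∀ e, ∃! i, i ∈ R1 ∧ A i e = 1)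
    (hbip2 : ∀ e, ∃! i, i ∉ R1 ∧ A i e = 1)
    (hsimple : ∀ e e' : Fin n1, (∀ i, A i e = A i e') → e = e')
    (hi : ∀ l, ∃ i, {j | H l j ≠ 0} ⊆ {j | A i j ≠ 0})
    (hii : ∀ l l', l ≠ l' →
        (∃ i, {j | H l j ≠ 0} ∪ {j | H l' j ≠ 0} ⊆ {j | A i j ≠ 0}) →
        {j | H l j ≠ 0} ∩ {j | H l' j ≠ 0} = ∅) :
    (Matrix.fromRows A H).IsTotallyUnimodular := by
  classical
  intro k f g hf hg
  choose ch hch using hi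
  set M : Matrix (Fin k) (Fin k) ℤ := (Matrix.fromRows A H).submatrix f g with hMdef
  have hMA : ∀ (r : Fin k) (i : Fin m1) (j : Fin k), f r = Sum.inl i → M r j = A i (g j) := by
    intro r i j hr
    rw [hMdef]
    simp [Matrix.submatrix_apply, hr]
  have hMH : ∀ (r : Fin k) (l : Fin m2) (j : Fin k), f r = Sum.inr l → M r j = H l (g j) := by
    intro r l j hr
    rw [hMdef]
    simp [Matrix.submatrix_apply, hr]
  obtain ⟨c, hc⟩ : ∃ c : Fin k → Fin k → ℤ, ∀ r r',
      c r r' = if (∃ i l, f r = Sum.inl i ∧ f r' = Sum.inr l ∧ ch l = i) then 1 else 0 :=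
    ⟨_, fun _ _ => rfl⟩
  obtain ⟨N, hN⟩ : ∃ N : Matrix (Fin k) (Fin k) ℤ, ∀ r j,
      N r j = M r j - ∑ r', c r r' * M r' j := ⟨_, fun _ _ => rfl⟩
  -- determinant is preserved
  have hNmul : N = (1 - Matrix.of c) * M := by
    ext r j
    rw [hN, Matrix.mul_apply]
    simp only [Matrix.sub_apply, Matrix.one_apply, Matrix.of_apply, sub_mul, ite_mul, one_mul,
      zero_mul, Finset.sum_sub_distrib, Finset.sum_ite_eq, Finset.mem_univ, if_true]
  have hdet1 : (1 - Matrix.of c).det = 1 := by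
    refine det_one_sub_nilpotent (Matrix.of c) (fun r => ∃ i, f r = Sum.inl i) ?_
    intro r r' hne
    rw [Matrix.of_apply, hc] at hne
    by_cases hcond : ∃ i l, f r = Sum.inl i ∧ f r' = Sum.inr l ∧ ch l = i
    · obtain ⟨i, l, h1, h2, _⟩ := hcond
      refine ⟨⟨i, h1⟩, ?_⟩
      rintro ⟨i', h'⟩
      rw [h2] at h'
      simp at h'
    · rw [if_neg hcond] at hne
      exact absurd rfl hne
  have hdetNM : N.det = M.det := by
    rw [hNmul, Matrix.det_mul, hdet1, one_mul]
  -- structural facts about N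
  have hS3 : ∀ (r : Fin k) (l : Fin m2) (j : Fin k), f r = Sum.inr l → N r j = H l (g j) := by
    intro r l j hr
    rw [hN]
    have hzero : ∀ r' ∈ Finset.univ, c r r' * M r' j = 0 := by
      intro r' _
      rw [hc]
      rw [if_neg, zero_mul]
      rintro ⟨i, l', h1, _⟩
      rw [hr] at h1
      simp at h1
    rw [Finset.sum_eq_zero hzero, sub_zero, hMH r l j hr]
  have hS1 : ∀ (r : Fin k) (i : Fin m1) (j : Fin k), f r = Sum.inl i →
      (∀ (r' : Fin k) (l : Fin m2), f r' = Sum.inr l → ch l = i → H l (g j) = 0) →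
      N r j = A i (g j) := by
    intro r i j hr hnone
    rw [hN]
    have hzero : ∀ r' ∈ Finset.univ, c r r' * M r' j = 0 := by
      intro r' _
      rw [hc]
      by_cases hcond : ∃ i' l, f r = Sum.inl i' ∧ f r' = Sum.inr l ∧ ch l = i'
      · obtain ⟨i', l, h1, h2, h3⟩ := hcond
        rw [hr] at h1
        have : i' = i := by simpa using h1.symm
        subst this
        rw [hMH r' l j h2, hnone r' l h2 h3, mul_zero]
      · rw [if_neg hcond, zero_mul]
    rw [Finset.sum_eq_zero hzero, sub_zero, hMA r i j hr]
  have hS2 : ∀ (r : Fin k) (i : Fin m1) (j : Fin k) (r0 : Fin k) (l0 : Fin m2),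
      f r = Sum.inl i → f r0 = Sum.inr l0 → ch l0 = i → H l0 (g j) = 1 →
      N r j = 0 ∧ A i (g j) = 1 := by
    intro r i j r0 l0 hr hr0 hch0 hH1
    have hA1 : A i (g j) = 1 := by
      have hsupp := hch l0
      have : A (ch l0) (g j) ≠ 0 := hsupp (by simp [hH1])
      rw [hch0] at this
      exact (hA01 i (g j)).resolve_left this
    have hsum : (∑ r', c r r' * M r' j) = 1 := by
      rw [Finset.sum_eq_single_of_mem r0 (Finset.mem_univ r0)]
      · rw [hc, if_pos ⟨i, l0, hr, hr0, hch0⟩, one_mul, hMH r0 l0 j hr0, hH1]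
      · intro r' _ hne
        rw [hc]
        by_cases hcond : ∃ i' l, f r = Sum.inl i' ∧ f r' = Sum.inr l ∧ ch l = i'
        · obtain ⟨i', l', h1, h2, h3⟩ := hcond
          rw [hr] at h1
          have hii' : i' = i := by simpa using h1.symm
          subst hii'
          rw [hMH r' l' j h2]
          have hll : l' ≠ l0 := by
            intro hl
            subst hl
            rw [← h2] at hr0
            exact hne (hf hr0.symm)
          have hdisj := hii l' l0 hll ⟨ch l0, ?_⟩
          · by_cases hHl' : H l' (g j) = 0
            · rw [hHl', mul_zero]
            · exfalso
              have : g j ∈ ({j | H l' j ≠ 0} ∩ {j | H l0 j ≠ 0} : Set (Fin n1)) :=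
                ⟨hHl', by simp [hH1]⟩
              rw [hdisj] at this
              exact this
          · refine Set.union_subset ?_ ?_
            · have := hch l'
              rwa [h3, ← hch0] at this
            · exact hch l0
        · rw [if_neg hcond, zero_mul]
    refine ⟨?_, hA1⟩
    rw [hN, hsum, hMA r i j hr, hA1]
    norm_num
  -- N is 0/1
  have h01N : ∀ r j, N r j = 0 ∨ N r j = 1 := by
    intro r j
    rcases hfr : f r with i | l
    · by_cases hex : ∃ (r0 : Fin k) (l0 : Fin m2), f r0 = Sum.inr l0 ∧ ch l0 = i ∧
          H l0 (g j) = 1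
      · obtain ⟨r0, l0, h1, h2, h3⟩ := hex
        exact Or.inl (hS2 r i j r0 l0 hfr h1 h2 h3).1
      · push_neg at hex
        rw [hS1 r i j hfr]
        · exact hA01 i (g j)
        · intro r' l h1 h2
          rcases hH01 l (g j) with h | h
          · exact h
          · exact absurd h (hex r' l h1 h2)
    · rw [hS3 r l j hfr]
      exact hH01 l (g j)
  -- characterization of ones
  have hC1 : ∀ (r : Fin k) (i : Fin m1) (j : Fin k), f r = Sum.inl i → N r j = 1 →
      A i (g j) = 1 ∧
      (∀ (r0 : Fin k) (l0 : Fin m2), f r0 = Sum.inr l0 → ch l0 = i → H l0 (g j) = 0) := by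
    intro r i j hr h1
    by_cases hex : ∃ (r0 : Fin k) (l0 : Fin m2), f r0 = Sum.inr l0 ∧ ch l0 = i ∧
        H l0 (g j) = 1
    · obtain ⟨r0, l0, ha, hb, hcc⟩ := hex
      have := (hS2 r i j r0 l0 hr ha hb hcc).1
      rw [this] at h1
      exact absurd h1.symm one_ne_zero
    · push_neg at hex
      have hall : ∀ (r0 : Fin k) (l0 : Fin m2), f r0 = Sum.inr l0 → ch l0 = i →
          H l0 (g j) = 0 := by
        intro r0 l0 ha hb
        rcases hH01 l0 (g j) with h | h
        · exact h
        · exact absurd h (hex r0 l0 ha hb)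
      refine ⟨?_, hall⟩
      rw [hS1 r i j hr hall] at h1
      exact h1
  have hC2 : ∀ (r : Fin k) (l : Fin m2) (j : Fin k), f r = Sum.inr l → N r j = 1 →
      H l (g j) = 1 ∧ A (ch l) (g j) = 1 := by
    intro r l j hr h1
    rw [hS3 r l j hr] at h1
    refine ⟨h1, ?_⟩
    have : A (ch l) (g j) ≠ 0 := hch l (by simp [h1])
    exact (hA01 _ _).resolve_left this
  -- the partition predicate
  set Q : Fin k → Prop := fun r => Sum.elim (fun i => i ∈ R1) (fun l => ch l ∈ R1) (f r)
    with hQdef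
  -- side uniqueness, in R1
  have hside : ∀ (j : Fin k) (r r' : Fin k), Q r → Q r' → N r j = 1 → N r' j = 1 → r = r' := by
    intro j r r' hQr hQr' h1 h1'
    obtain ⟨p, ⟨hpR, hp1⟩, hpu⟩ := hbip1 (g j)
    have vert : ∀ (s : Fin k), Q s → N s j = 1 →
        (∃ i, f s = Sum.inl i ∧ i = p) ∨ (∃ l, f s = Sum.inr l ∧ ch l = p) := by
      intro s hQs hs1
      rcases hfs : f s with i | l
      · left
        refine ⟨i, rfl, ?_⟩
        have hiR : i ∈ R1 := by simpa [hQdef, hfs] using hQs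
        exact hpu i ⟨hiR, (hC1 s i j hfs hs1).1⟩
      · right
        refine ⟨l, rfl, ?_⟩
        have hiR : ch l ∈ R1 := by simpa [hQdef, hfs] using hQs
        exact hpu (ch l) ⟨hiR, (hC2 s l j hfs hs1).2⟩
    rcases vert r hQr h1 with ⟨i, hri, hip⟩ | ⟨l, hrl, hlp⟩ <;>
      rcases vert r' hQr' h1' with ⟨i', hri', hip'⟩ | ⟨l', hrl', hlp'⟩
    · apply hf; rw [hri, hri', hip, hip']
    · exfalso
      have := (hC1 r i j hri h1).2 r' l' hrl' (by rw [hlp', ← hip])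
      rw [(hC2 r' l' j hrl' h1').1] at this
      exact one_ne_zero this
    · exfalso
      have := (hC1 r' i' j hri' h1').2 r l hrl (by rw [hlp, ← hip'])
      rw [(hC2 r l j hrl h1).1] at this
      exact one_ne_zero this
    · have hll : l = l' := by
        by_contra hne
        have hdisj := hii l l' hne ⟨p, ?_⟩
        · have : g j ∈ ({j | H l j ≠ 0} ∩ {j | H l' j ≠ 0} : Set (Fin n1)) :=
            ⟨by simp [(hC2 r l j hrl h1).1], by simp [(hC2 r' l' j hrl' h1').1]⟩
          rw [hdisj] at this
          exact this
        · refine Set.union_subset ?_ ?_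
          · have := hch l; rwa [hlp] at this
          · have := hch l'; rwa [hlp'] at this
      apply hf; rw [hrl, hrl', hll]
  -- side uniqueness, not in R1
  have hside2 : ∀ (j : Fin k) (r r' : Fin k), ¬Q r → ¬Q r' → N r j = 1 → N r' j = 1 →
      r = r' := by
    intro j r r' hQr hQr' h1 h1'
    obtain ⟨p, ⟨hpR, hp1⟩, hpu⟩ := hbip2 (g j)
    have vert : ∀ (s : Fin k), ¬Q s → N s j = 1 →
        (∃ i, f s = Sum.inl i ∧ i = p) ∨ (∃ l, f s = Sum.inr l ∧ ch l = p) := by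
      intro s hQs hs1
      rcases hfs : f s with i | l
      · left
        refine ⟨i, rfl, ?_⟩
        have hiR : i ∉ R1 := by simpa [hQdef, hfs] using hQs
        exact hpu i ⟨hiR, (hC1 s i j hfs hs1).1⟩
      · right
        refine ⟨l, rfl, ?_⟩
        have hiR : ch l ∉ R1 := by simpa [hQdef, hfs] using hQs
        exact hpu (ch l) ⟨hiR, (hC2 s l j hfs hs1).2⟩
    rcases vert r hQr h1 with ⟨i, hri, hip⟩ | ⟨l, hrl, hlp⟩ <;>
      rcases vert r' hQr' h1' with ⟨i', hri', hip'⟩ | ⟨l', hrl', hlp'⟩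
    · apply hf; rw [hri, hri', hip, hip']
    · exfalso
      have := (hC1 r i j hri h1).2 r' l' hrl' (by rw [hlp', ← hip])
      rw [(hC2 r' l' j hrl' h1').1] at this
      exact one_ne_zero this
    · exfalso
      have := (hC1 r' i' j hri' h1').2 r l hrl (by rw [hlp, ← hip'])
      rw [(hC2 r l j hrl h1).1] at this
      exact one_ne_zero this
    · have hll : l = l' := by
        by_contra hne
        have hdisj := hii l l' hne ⟨p, ?_⟩
        · have : g j ∈ ({j | H l j ≠ 0} ∩ {j | H l' j ≠ 0} : Set (Fin n1)) :=
            ⟨by simp [(hC2 r l j hrl h1).1], by simp [(hC2 r' l' j hrl' h1').1]⟩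
          rw [hdisj] at this
          exact this
        · refine Set.union_subset ?_ ?_
          · have := hch l; rwa [hlp] at this
          · have := hch l'; rwa [hlp'] at this
      apply hf; rw [hrl, hrl', hll]
  have hmain := bip_det k N Q h01N (fun j r r' => hside j r r') (fun j r r' => hside2 j r r')
  rw [hdetNM] at hmain
  exact sign_range_of_eq hmain
end

section
/- An instance of DR(1) admits a solution if and only if for every (i,j) ∈ I one has Σ_{l=0}^{k−1} r_{j+l} = ρ_j(m) and Σ_{l=0}^{k−1} c_{i+l} = σ_i(n). -/
open scoped Classical

/-- The grid `[m] × [n] = {1,…,m} × {1,…,n}`. -/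
def gridIcc (m n : ℕ) : Finset (ℕ × ℕ) := Finset.Icc 1 m ×ˢ Finset.Icc 1 n

/-- The corner points `C(m,n,k) = ([m] × [n]) ∩ (kℕ₀+1)²`. -/
def cornerPts (m n k : ℕ) : Finset (ℕ × ℕ) :=
  (gridIcc m n).filter fun p => p.1 % k = 1 % k ∧ p.2 % k = 1 % k

/-- The block `B_k(i,j) = {(i+a, j+b) : a, b ∈ [k-1]₀}`. -/
def blockF (k i j : ℕ) : Finset (ℕ × ℕ) :=
  Finset.Icc i (i + k - 1) ×ˢ Finset.Icc j (j + k - 1)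

/-- `G(I) = ⋃_{(i,j) ∈ I} B_k(i,j)`. -/
def GofI (k : ℕ) (I : Finset (ℕ × ℕ)) : Finset (ℕ × ℕ) :=
  I.biUnion fun p => blockF k p.1 p.2

/-- `Π_x(I)`, the projection of `I` onto the first coordinate. -/
def PiX (I : Finset (ℕ × ℕ)) : Finset ℕ := I.image Prod.fst

/-- `Π_y(I)`, the projection of `I` onto the second coordinate. -/
def PiY (I : Finset (ℕ × ℕ)) : Finset ℕ := I.image Prod.snd

/-- `σ_i(j) = |({i} × [j]) ∩ I|`. -/
def sigmaI (I : Finset (ℕ × ℕ)) (i j : ℕ) : ℕ :=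
  (I.filter fun z => z.1 = i ∧ z.2 ∈ Finset.Icc 1 j).card

/-- `ρ_j(i) = |([i] × {j}) ∩ I|`. -/
def rhoI (I : Finset (ℕ × ℕ)) (j i : ℕ) : ℕ :=
  (I.filter fun z => z.1 ∈ Finset.Icc 1 i ∧ z.2 = j).card

/-!
Summing the `k` row constraints of a row strip regroups its cells into the blocks of the strip,
each of which contributes `1`; so the conditions are necessary. Conversely, the conditions say
exactly that the blocks of row strip `j` can be distributed over its `k` rows with `r (j + l)`
blocks on row `j + l`, and likewise for the column strips. Choose such distributions `v` (rows)
and `u` (columns) independently and put the single `1` of the block with corner `q` at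
`q + (u q, v q)`: a block's row offset only affects row sums and its column offset only
column sums.
-/

open Finset

theorem Nat.ModEq.eq_of_lt_add {a b k : ℕ} (h : a ≡ b [MOD k]) (hab : a < b + k)
    (hba : b < a + k) : a = b :=
  h.eq_of_abs_lt (abs_sub_lt_iff.mpr ⟨by omega, by omega⟩)

theorem exists_card_fiber_eq {α β : Type*} [DecidableEq α] [DecidableEq β] [Nonempty β]
    (s : Finset α) (L : Finset β) (g : β → ℕ) (h : #s = ∑ l ∈ L, g l) :
    ∃ f : α → β, (∀ a ∈ s, f a ∈ L) ∧ ∀ l ∈ L, #{a ∈ s | f a = l} = g l := by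
  induction L using Finset.induction_on generalizing s with
  | empty => exact ⟨fun _ => Classical.arbitrary β, by simp_all⟩
  | @insert l₀ L hl₀ ih =>
    rw [sum_insert hl₀] at h
    obtain ⟨t, hts, ht⟩ := exists_subset_card_eq (show g l₀ ≤ #s by omega)
    obtain ⟨f, hfL, hf⟩ := ih (s \ t) (by rw [card_sdiff_of_subset hts]; omega)
    refine ⟨fun a => if a ∈ t then l₀ else f a, fun a ha => ?_, fun l hl => ?_⟩
    · dsimp only
      split_ifs with hat
      · exact mem_insert_self _ _
      · exact mem_insert_of_mem (hfL a (mem_sdiff.mpr ⟨ha, hat⟩))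
    · rcases mem_insert.mp hl with rfl | hl
      · rw [← ht]
        congr 1
        ext a
        simp only [mem_filter, ite_eq_left_iff]
        refine ⟨fun ⟨has, hfa⟩ => by_contra fun hat => ?_,
          fun hat => ⟨hts hat, fun h => (h hat).elim⟩⟩
        exact hl₀ (hfa hat ▸ hfL a (mem_sdiff.mpr ⟨has, hat⟩))
      · rw [← hf l hl]
        congr 1
        ext a
        simp only [mem_filter, mem_sdiff]
        split_ifs with hat
        · exact ⟨fun ⟨_, h⟩ => (hl₀ (h ▸ hl)).elim, fun ⟨⟨_, h⟩, _⟩ => (h hat).elim⟩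
        · tauto

theorem exists_fiberwise_card_fiber_eq {α β γ : Type*} [DecidableEq α] [DecidableEq β]
    [DecidableEq γ] [Nonempty β] (s : Finset α) (π : α → γ) (L : Finset β) (g : γ → β → ℕ)
    (h : ∀ j ∈ s.image π, #{a ∈ s | π a = j} = ∑ l ∈ L, g j l) :
    ∃ f : α → β, (∀ a ∈ s, f a ∈ L) ∧
      ∀ j ∈ s.image π, ∀ l ∈ L, #{a ∈ s | π a = j ∧ f a = l} = g j l := by
  choose! F hFL hF using fun j hj => exists_card_fiber_eq _ L (g j) (h j hj)
  refine ⟨fun a => F (π a) a, fun a ha => ?_, fun j hj l hl => ?_⟩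
  · exact hFL _ (mem_image_of_mem π ha) a (mem_filter.mpr ⟨ha, rfl⟩)
  · rw [← hF j hj l hl, filter_filter]
    congr 1
    exact filter_congr fun a _ => by constructor <;> rintro ⟨rfl, h⟩ <;> exact ⟨rfl, h⟩

theorem sum_Icc_add_sub_one_eq_sum_range {M : Type*} [AddCommMonoid M] {k : ℕ} (hk : 0 < k) (i : ℕ)
    (f : ℕ → M) : ∑ p ∈ Icc i (i + k - 1), f p = ∑ l ∈ range k, f (i + l) := by
  rw [← Ico_add_one_right_eq_Icc, Nat.sub_add_cancel (by omega),
    sum_Ico_eq_sum_range, Nat.add_sub_cancel_left]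

theorem mem_blockF {k i j : ℕ} (hk : 0 < k) {z : ℕ × ℕ} :
    z ∈ blockF k i j ↔ (i ≤ z.1 ∧ z.1 < i + k) ∧ j ≤ z.2 ∧ z.2 < j + k := by
  simp only [blockF, mem_product, mem_Icc]
  omega

theorem mk_add_mem_blockF {k a b : ℕ} (ha : a < k) (hb : b < k) (i j : ℕ) :
    (i + a, j + b) ∈ blockF k i j := by
  rw [mem_blockF (by omega)]
  omega

theorem sum_blockF_eq_sum_range_sum_Icc {M : Type*} [AddCommMonoid M] {k : ℕ} (hk : 0 < k)
    (i j : ℕ) (f : ℕ × ℕ → M) :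
    ∑ z ∈ blockF k i j, f z = ∑ l ∈ range k, ∑ p ∈ Icc i (i + k - 1), f (p, j + l) := by
  rw [blockF, sum_product, sum_comm]
  exact sum_Icc_add_sub_one_eq_sum_range hk j _

theorem sum_blockF_eq_sum_range_sum_Icc' {M : Type*} [AddCommMonoid M] {k : ℕ} (hk : 0 < k)
    (i j : ℕ) (f : ℕ × ℕ → M) :
    ∑ z ∈ blockF k i j, f z = ∑ l ∈ range k, ∑ p ∈ Icc j (j + k - 1), f (i + l, p) := by
  rw [blockF, sum_product]
  exact sum_Icc_add_sub_one_eq_sum_range hk i _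

def IsGridAligned (k : ℕ) (I : Finset (ℕ × ℕ)) : Prop :=
  ∀ p ∈ I, ∀ q ∈ I, p.1 ≡ q.1 [MOD k] ∧ p.2 ≡ q.2 [MOD k]

theorem isGridAligned_of_subset_cornerPts {m n k : ℕ} {I : Finset (ℕ × ℕ)}
    (hI : I ⊆ cornerPts m n k) : IsGridAligned k I := fun p hp q hq => by
  have hp' := (mem_filter.mp (hI hp)).2
  have hq' := (mem_filter.mp (hI hq)).2
  exact ⟨hp'.1.trans hq'.1.symm, hp'.2.trans hq'.2.symm⟩

theorem rhoI_eq_card {m n k : ℕ} {I : Finset (ℕ × ℕ)} (hI : I ⊆ cornerPts m n k) (j : ℕ) :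
    rhoI I j m = #{q ∈ I | q.2 = j} := by
  refine congrArg card (filter_congr fun q hq => and_iff_right_of_imp fun _ => ?_)
  have := (mem_filter.mp (hI hq)).1
  simp only [gridIcc, mem_product] at this
  exact this.1

theorem sigmaI_eq_card {m n k : ℕ} {I : Finset (ℕ × ℕ)} (hI : I ⊆ cornerPts m n k) (i : ℕ) :
    sigmaI I i n = #{q ∈ I | q.1 = i} := by
  refine congrArg card (filter_congr fun q hq => and_iff_left_of_imp fun _ => ?_)
  have := (mem_filter.mp (hI hq)).1
  simp only [gridIcc, mem_product] at this
  exact this.2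

namespace IsGridAligned

variable {M : Type*} [AddCommMonoid M] {k : ℕ} {I : Finset (ℕ × ℕ)}

theorem eq_of_mem_blockF (hI : IsGridAligned k I) (hk : 0 < k) {p q z : ℕ × ℕ} (hp : p ∈ I)
    (hq : q ∈ I) (hzp : z ∈ blockF k p.1 p.2) (hzq : z ∈ blockF k q.1 q.2) : p = q := by
  rw [mem_blockF hk] at hzp hzq
  exact Prod.ext ((hI p hp q hq).1.eq_of_lt_add (by omega) (by omega))
    ((hI p hp q hq).2.eq_of_lt_add (by omega) (by omega))

theorem sum_GofI (hI : IsGridAligned k I) (hk : 0 < k) (f : ℕ × ℕ → M) :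
    ∑ z ∈ GofI k I, f z = ∑ p ∈ I, ∑ z ∈ blockF k p.1 p.2, f z :=
  sum_biUnion fun _ hp _ hq hpq => disjoint_left.mpr fun _ hzp hzq =>
    hpq (hI.eq_of_mem_blockF hk hp hq hzp hzq)

theorem sum_filter_snd_GofI (hI : IsGridAligned k I) (hk : 0 < k) {j : ℕ} (hj : j ∈ PiY I)
    (f : ℕ → M) :
    ∑ z ∈ (GofI k I).filter (fun z => z.2 = j), f z.1
      = ∑ q ∈ I.filter (fun q => q.2 = j), ∑ p ∈ Icc q.1 (q.1 + k - 1), f p := by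
  obtain ⟨p₀, hp₀, rfl⟩ := mem_image.mp hj
  have hrow : ∀ q ∈ I, p₀.2 ∈ Icc q.2 (q.2 + k - 1) ↔ q.2 = p₀.2 := fun q hq => by
    refine ⟨fun h => ?_, fun h => by rw [mem_Icc]; omega⟩
    rw [mem_Icc] at h
    exact (hI q hq p₀ hp₀).2.eq_of_lt_add (by omega) (by omega)
  rw [sum_filter, hI.sum_GofI hk, sum_filter]
  refine sum_congr rfl fun q hq => ?_
  simp only [blockF, sum_product, sum_ite_eq', hrow q hq, sum_ite_irrel, sum_const_zero]

theorem sum_filter_fst_GofI (hI : IsGridAligned k I) (hk : 0 < k) {i : ℕ} (hi : i ∈ PiX I)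
    (f : ℕ → M) :
    ∑ z ∈ (GofI k I).filter (fun z => z.1 = i), f z.2
      = ∑ q ∈ I.filter (fun q => q.1 = i), ∑ p ∈ Icc q.2 (q.2 + k - 1), f p := by
  obtain ⟨p₀, hp₀, rfl⟩ := mem_image.mp hi
  have hcol : ∀ q ∈ I, p₀.1 ∈ Icc q.1 (q.1 + k - 1) ↔ q.1 = p₀.1 := fun q hq => by
    refine ⟨fun h => ?_, fun h => by rw [mem_Icc]; omega⟩
    rw [mem_Icc] at h
    exact (hI q hq p₀ hp₀).1.eq_of_lt_add (by omega) (by omega)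
  rw [sum_filter, hI.sum_GofI hk, sum_filter]
  refine sum_congr rfl fun q hq => ?_
  simp only [blockF, sum_product_right, sum_ite_eq', hcol q hq, sum_ite_irrel, sum_const_zero]

theorem sum_range_sum_filter_snd_GofI (hI : IsGridAligned k I) (hk : 0 < k) {j : ℕ}
    (hj : j ∈ PiY I) {x : ℕ × ℕ → ℕ} (hx : ∀ p ∈ I, ∑ z ∈ blockF k p.1 p.2, x z = 1) :
    ∑ l ∈ range k, ∑ z ∈ (GofI k I).filter (fun z => z.2 = j), x (z.1, j + l)
      = #{q ∈ I | q.2 = j} := by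
  calc _ = ∑ l ∈ range k, ∑ q ∈ I.filter (fun q => q.2 = j),
        ∑ p ∈ Icc q.1 (q.1 + k - 1), x (p, j + l) :=
        sum_congr rfl fun l _ => hI.sum_filter_snd_GofI hk hj fun p => x (p, j + l)
    _ = ∑ q ∈ I.filter (fun q => q.2 = j), 1 := by
        rw [sum_comm]
        refine sum_congr rfl fun q hq => ?_
        obtain ⟨hqI, rfl⟩ := mem_filter.mp hq
        exact (sum_blockF_eq_sum_range_sum_Icc hk _ _ x).symm.trans (hx q hqI)
    _ = #{q ∈ I | q.2 = j} := (card_eq_sum_ones _).symm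

theorem sum_range_sum_filter_fst_GofI (hI : IsGridAligned k I) (hk : 0 < k) {i : ℕ}
    (hi : i ∈ PiX I) {x : ℕ × ℕ → ℕ} (hx : ∀ p ∈ I, ∑ z ∈ blockF k p.1 p.2, x z = 1) :
    ∑ l ∈ range k, ∑ z ∈ (GofI k I).filter (fun z => z.1 = i), x (i + l, z.2)
      = #{q ∈ I | q.1 = i} := by
  calc _ = ∑ l ∈ range k, ∑ q ∈ I.filter (fun q => q.1 = i),
        ∑ p ∈ Icc q.2 (q.2 + k - 1), x (i + l, p) :=
        sum_congr rfl fun l _ => hI.sum_filter_fst_GofI hk hi fun p => x (i + l, p)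
    _ = ∑ q ∈ I.filter (fun q => q.1 = i), 1 := by
        rw [sum_comm]
        refine sum_congr rfl fun q hq => ?_
        obtain ⟨hqI, rfl⟩ := mem_filter.mp hq
        exact (sum_blockF_eq_sum_range_sum_Icc' hk _ _ x).symm.trans (hx q hqI)
    _ = #{q ∈ I | q.1 = i} := (card_eq_sum_ones _).symm

end IsGridAligned

def markedCells (I : Finset (ℕ × ℕ)) (u v : ℕ × ℕ → ℕ) : Finset (ℕ × ℕ) :=
  I.image fun p => (p.1 + u p, p.2 + v p)

namespace IsGridAligned

variable {k : ℕ} {I : Finset (ℕ × ℕ)} {u v : ℕ × ℕ → ℕ}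

theorem mem_markedCells_iff (hI : IsGridAligned k I) (hk : 0 < k) (hu : ∀ p ∈ I, u p < k)
    (hv : ∀ p ∈ I, v p < k) {q w : ℕ × ℕ} (hq : q ∈ I) (hw : w ∈ blockF k q.1 q.2) :
    w ∈ markedCells I u v ↔ w = (q.1 + u q, q.2 + v q) := by
  refine ⟨fun h => ?_, fun h => h ▸ mem_image_of_mem _ hq⟩
  obtain ⟨p, hp, rfl⟩ := mem_image.mp h
  rw [hI.eq_of_mem_blockF hk hp hq (mk_add_mem_blockF (hu p hp) (hv p hp) _ _) hw]

theorem sum_blockF_markedCells (hI : IsGridAligned k I) (hk : 0 < k) (hu : ∀ p ∈ I, u p < k)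
    (hv : ∀ p ∈ I, v p < k) {q : ℕ × ℕ} (hq : q ∈ I) :
    ∑ w ∈ blockF k q.1 q.2, (if w ∈ markedCells I u v then 1 else 0) = 1 := by
  rw [sum_congr rfl fun w hw => if_congr (hI.mem_markedCells_iff hk hu hv hq hw) rfl rfl,
    sum_ite_eq', if_pos (mk_add_mem_blockF (hu q hq) (hv q hq) _ _)]

theorem sum_Icc_markedCells_row (hI : IsGridAligned k I) (hk : 0 < k) (hu : ∀ p ∈ I, u p < k)
    (hv : ∀ p ∈ I, v p < k) {q : ℕ × ℕ} (hq : q ∈ I) {l : ℕ} (hl : l < k) :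
    ∑ p ∈ Icc q.1 (q.1 + k - 1), (if (p, q.2 + l) ∈ markedCells I u v then 1 else 0)
      = if v q = l then 1 else 0 := by
  have hiff : ∀ p ∈ Icc q.1 (q.1 + k - 1),
      (p, q.2 + l) ∈ markedCells I u v ↔ p = q.1 + u q ∧ v q = l := fun p hp => by
    rw [hI.mem_markedCells_iff hk hu hv hq (by rw [mem_blockF hk]; rw [mem_Icc] at hp; omega),
      Prod.mk.injEq]
    omega
  have huq : q.1 + u q ∈ Icc q.1 (q.1 + k - 1) := by
    have := hu q hq
    rw [mem_Icc]
    omega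
  rw [sum_congr rfl fun p hp => if_congr (hiff p hp) rfl rfl]
  simp only [ite_and, sum_ite_eq', if_pos huq]

theorem sum_Icc_markedCells_col (hI : IsGridAligned k I) (hk : 0 < k) (hu : ∀ p ∈ I, u p < k)
    (hv : ∀ p ∈ I, v p < k) {q : ℕ × ℕ} (hq : q ∈ I) {l : ℕ} (hl : l < k) :
    ∑ p ∈ Icc q.2 (q.2 + k - 1), (if (q.1 + l, p) ∈ markedCells I u v then 1 else 0)
      = if u q = l then 1 else 0 := by
  have hiff : ∀ p ∈ Icc q.2 (q.2 + k - 1),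
      (q.1 + l, p) ∈ markedCells I u v ↔ p = q.2 + v q ∧ u q = l := fun p hp => by
    rw [hI.mem_markedCells_iff hk hu hv hq (by rw [mem_blockF hk]; rw [mem_Icc] at hp; omega),
      Prod.mk.injEq]
    omega
  have hvq : q.2 + v q ∈ Icc q.2 (q.2 + k - 1) := by
    have := hv q hq
    rw [mem_Icc]
    omega
  rw [sum_congr rfl fun p hp => if_congr (hiff p hp) rfl rfl]
  simp only [ite_and, sum_ite_eq', if_pos hvq]

theorem sum_filter_snd_GofI_markedCells (hI : IsGridAligned k I) (hk : 0 < k)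
    (hu : ∀ p ∈ I, u p < k) (hv : ∀ p ∈ I, v p < k) {j : ℕ} (hj : j ∈ PiY I) {l : ℕ}
    (hl : l < k) :
    ∑ z ∈ (GofI k I).filter (fun z => z.2 = j),
        (if (z.1, j + l) ∈ markedCells I u v then 1 else 0)
      = #{q ∈ I | q.2 = j ∧ v q = l} := by
  rw [hI.sum_filter_snd_GofI hk hj fun p => if (p, j + l) ∈ markedCells I u v then 1 else 0,
    ← filter_filter, card_filter]
  refine sum_congr rfl fun q hq => ?_
  obtain ⟨hqI, rfl⟩ := mem_filter.mp hq
  exact hI.sum_Icc_markedCells_row hk hu hv hqI hl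

theorem sum_filter_fst_GofI_markedCells (hI : IsGridAligned k I) (hk : 0 < k)
    (hu : ∀ p ∈ I, u p < k) (hv : ∀ p ∈ I, v p < k) {i : ℕ} (hi : i ∈ PiX I) {l : ℕ}
    (hl : l < k) :
    ∑ z ∈ (GofI k I).filter (fun z => z.1 = i),
        (if (i + l, z.2) ∈ markedCells I u v then 1 else 0)
      = #{q ∈ I | q.1 = i ∧ u q = l} := by
  rw [hI.sum_filter_fst_GofI hk hi fun p => if (i + l, p) ∈ markedCells I u v then 1 else 0,
    ← filter_filter, card_filter]
  refine sum_congr rfl fun q hq => ?_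
  obtain ⟨hqI, rfl⟩ := mem_filter.mp hq
  exact hI.sum_Icc_markedCells_col hk hu hv hqI hl

end IsGridAligned

theorem stmt1_general (k m n : ℕ) (hk : 0 < k)
    (I : Finset (ℕ × ℕ)) (hI : I ⊆ cornerPts m n k) (r c : ℕ → ℕ) :
    (∃ x : ℕ × ℕ → ℕ,
      (∀ p ∈ GofI k I, x p ≤ 1) ∧
      (∀ j ∈ PiY I, ∀ l < k,
        ∑ z ∈ (GofI k I).filter (fun z => z.2 = j), x (z.1, j + l) = r (j + l)) ∧
      (∀ i ∈ PiX I, ∀ l < k,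
        ∑ z ∈ (GofI k I).filter (fun z => z.1 = i), x (i + l, z.2) = c (i + l)) ∧
      (∀ p ∈ I, ∑ z ∈ blockF k p.1 p.2, x z = 1))
    ↔ (∀ p ∈ I,
        (∑ l ∈ Finset.range k, r (p.2 + l)) = rhoI I p.2 m ∧
        (∑ l ∈ Finset.range k, c (p.1 + l)) = sigmaI I p.1 n) := by
  have hA := isGridAligned_of_subset_cornerPts hI
  constructor
  · rintro ⟨x, -, hrow, hcol, hblock⟩ p hp
    have hj : p.2 ∈ PiY I := mem_image_of_mem _ hp
    have hi : p.1 ∈ PiX I := mem_image_of_mem _ hp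
    rw [rhoI_eq_card hI, sigmaI_eq_card hI, ← hA.sum_range_sum_filter_snd_GofI hk hj hblock,
      ← hA.sum_range_sum_filter_fst_GofI hk hi hblock]
    exact ⟨sum_congr rfl fun l hl => (hrow _ hj l (mem_range.mp hl)).symm,
      sum_congr rfl fun l hl => (hcol _ hi l (mem_range.mp hl)).symm⟩
  · intro h
    have hrowCard : ∀ j ∈ PiY I, #{q ∈ I | q.2 = j} = ∑ l ∈ range k, r (j + l) :=
      forall_mem_image.mpr fun p hp => (rhoI_eq_card hI _ ▸ h p hp).1.symm
    have hcolCard : ∀ i ∈ PiX I, #{q ∈ I | q.1 = i} = ∑ l ∈ range k, c (i + l) :=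
      forall_mem_image.mpr fun p hp => (sigmaI_eq_card hI _ ▸ h p hp).2.symm
    obtain ⟨v, hv, hvr⟩ := exists_fiberwise_card_fiber_eq I Prod.snd (range k) _ hrowCard
    obtain ⟨u, hu, huc⟩ := exists_fiberwise_card_fiber_eq I Prod.fst (range k) _ hcolCard
    simp only [mem_range] at hu hv hvr huc
    refine ⟨fun w => if w ∈ markedCells I u v then 1 else 0,
      fun _ _ => ite_le_one le_rfl zero_le_one, fun j hj l hl => ?_, fun i hi l hl => ?_,
      fun q hq => hA.sum_blockF_markedCells hk hu hv hq⟩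
    · rw [hA.sum_filter_snd_GofI_markedCells hk hu hv hj hl]
      exact hvr j hj l hl
    · rw [hA.sum_filter_fst_GofI_markedCells hk hu hv hi hl]
      exact huc i hi l hl

/-- An instance of DR(1) admits a solution if and only if for every `(i,j) ∈ I`
one has `Σ_{l=0}^{k−1} r_{j+l} = ρ_j(m)` and `Σ_{l=0}^{k−1} c_{i+l} = σ_i(n)`. -/
theorem stmt1 (k m n : ℕ) (hk : 0 < k)
    (hm : k ∣ m) (hm0 : 0 < m) (hn : k ∣ n) (hn0 : 0 < n)
    (I : Finset (ℕ × ℕ)) (hI : I ⊆ cornerPts m n k) (r c : ℕ → ℕ) :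
    (∃ x : ℕ × ℕ → ℕ,
      (∀ p ∈ GofI k I, x p ≤ 1) ∧
      (∀ j ∈ PiY I, ∀ l < k,
        ∑ z ∈ (GofI k I).filter (fun z => z.2 = j), x (z.1, j + l) = r (j + l)) ∧
      (∀ i ∈ PiX I, ∀ l < k,
        ∑ z ∈ (GofI k I).filter (fun z => z.1 = i), x (i + l, z.2) = c (i + l)) ∧
      (∀ p ∈ I, ∑ z ∈ blockF k p.1 p.2, x z = 1))
    ↔ (∀ p ∈ I,
        (∑ l ∈ Finset.range k, r (p.2 + l)) = rhoI I p.2 m ∧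
        (∑ l ∈ Finset.range k, c (p.1 + l)) = sigmaI I p.1 n) :=
  stmt1_general k m n hk I hI r c
end

section
/- Let k ∈ ℕ, m, n ∈ kℕ, r_1,…,r_n, c_1,…,c_m ∈ ℕ₀, and v(i,j) ∈ {0,1} for (i,j) ∈ C(m,n,k). Then there exists a binary matrix ξ on [m]×[n] with row sums r_1,…,r_n, column sums c_1,…,c_m, and Σ_{(p,q)∈B_k(i,j)} ξ_{p,q} ≤ v(i,j) for all (i,j) ∈ C(m,n,k), if and only if there exist η_{i,j} ∈ {0,1}, (i,j) ∈ C(m,n,k), such that Σ_{i∈[m]∩(kℕ₀+1)} η_{i,j} = Σ_{l=0}^{k−1} r_{j+l} for every j ∈ [n]∩(kℕ₀+1), Σ_{j∈[n]∩(kℕ₀+1)} η_{i,j} = Σ_{l=0}^{k−1} c_{i+l} for every i ∈ [m]∩(kℕ₀+1), and η_{i,j} = 0 whenever v(i,j) = 0. -/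
/-!
Summing a feasible ξ over the blocks gives a feasible η: the block constraints with v ∈ {0,1}
force η ≤ 1 and η = 0 where v = 0, and the aggregated line sums are sums of row and column sums.

Conversely, put a single 1 into every block (i, j) with η(i, j) = 1. Among the active blocks
with a fixed j, split them into groups of sizes r_j, …, r_{j+k-1}; the group of a block decides
the second coordinate j + b of its 1. The first coordinate i + a is decided in the same way by
splitting the active blocks with a fixed i according to c_i, …, c_{i+k-1}. The two choices are
independent, and each line p = i + a (resp. q = j + b) meets exactly the blocks of group a
(resp. b), so it receives the prescribed number of ones.
-/

open scoped Classical

/-- `[m] ∩ (kℕ₀+1)`. -/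
def cornerLine (m k : ℕ) : Finset ℕ :=
  (Finset.Icc 1 m).filter fun i => i % k = 1 % k

open Finset

theorem Finset.exists_fiber_card_eq {α β : Type*} [DecidableEq α] [DecidableEq β] [Nonempty β]
    (g : β → ℕ) (L : Finset β) (s : Finset α) (hs : #s = ∑ l ∈ L, g l) :
    ∃ f : α → β, (∀ x ∈ s, f x ∈ L) ∧ ∀ l ∈ L, #{x ∈ s | f x = l} = g l := by
  induction L using Finset.induction_on generalizing s with
  | empty => exact ⟨fun _ => Classical.arbitrary β, by simp_all⟩
  | insert l₀ L hl₀ ih =>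
    rw [sum_insert hl₀] at hs
    obtain ⟨t, hts, ht⟩ := exists_subset_card_eq (show ∑ l ∈ L, g l ≤ #s by omega)
    obtain ⟨f, hfL, hf⟩ := ih t ht
    refine ⟨fun x => if x ∈ t then f x else l₀, fun x _ => ?_, ?_⟩
    · dsimp only
      split_ifs with hx
      · exact mem_insert_of_mem (hfL x hx)
      · exact mem_insert_self l₀ L
    · have hfl₀ : ∀ x ∈ t, f x ≠ l₀ := fun x hx h => hl₀ (h ▸ hfL x hx)
      rintro l hl
      rcases mem_insert.1 hl with rfl | hl
      · have : {x ∈ s | (if x ∈ t then f x else l) = l} = s \ t := by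
          ext x
          by_cases hx : x ∈ t <;> simp [hx, hfl₀]
        rw [this, card_sdiff_of_subset hts]
        omega
      · have : {x ∈ s | (if x ∈ t then f x else l₀) = l} = {x ∈ t | f x = l} := by
          ext x
          by_cases hx : x ∈ t
          · simp [hx, hts hx]
          · simpa [hx] using fun _ (h : l₀ = l) => hl₀ (h ▸ hl)
        rw [this, hf l hl]

theorem Finset.exists_family_fiber_card_eq {ι α β : Type*} [DecidableEq α] [DecidableEq β]
    [Nonempty β] (t : Finset ι) (s : ι → Finset α) (L : Finset β) (g : ι → β → ℕ)
    (hs : ∀ j ∈ t, #(s j) = ∑ l ∈ L, g j l) :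
    ∃ f : ι → α → β,
      ∀ j ∈ t, (∀ x ∈ s j, f j x ∈ L) ∧ ∀ l ∈ L, #{x ∈ s j | f j x = l} = g j l := by
  have : ∀ j, ∃ f : α → β, j ∈ t →
      (∀ x ∈ s j, f x ∈ L) ∧ ∀ l ∈ L, #{x ∈ s j | f x = l} = g j l := fun j =>
    if hj : j ∈ t then (exists_fiber_card_eq (g j) L (s j) (hs j hj)).imp fun _ hf _ => hf
    else ⟨fun _ => Classical.arbitrary β, fun h => absurd h hj⟩
  choose f hf using this
  exact ⟨f, hf⟩

section BlockIndexing

variable {k m n : ℕ}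

lemma dvd_sub_one_of_mem_cornerLine {i : ℕ} (hi : i ∈ cornerLine m k) : k ∣ i - 1 := by
  simp only [cornerLine, mem_filter, mem_Icc] at hi
  exact (Nat.modEq_iff_dvd' hi.1.1).1 hi.2.symm

lemma add_mem_Icc_of_mem_cornerLine (hm : k ∣ m) {i a : ℕ} (hi : i ∈ cornerLine m k)
    (ha : a < k) : i + a ∈ Icc 1 m := by
  obtain ⟨t, ht⟩ := dvd_sub_one_of_mem_cornerLine hi
  obtain ⟨s, rfl⟩ := hm
  simp only [cornerLine, mem_filter, mem_Icc] at hi ⊢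
  have hts : t < s := Nat.lt_of_mul_lt_mul_left (a := k) (by omega)
  have := Nat.mul_le_mul_left k hts
  rw [Nat.mul_succ] at this
  omega

lemma exists_mem_cornerLine_add_eq (hk : 0 < k) {p : ℕ} (hp : p ∈ Icc 1 m) :
    ∃ i ∈ cornerLine m k, ∃ a < k, i + a = p := by
  refine ⟨k * ((p - 1) / k) + 1, ?_, (p - 1) % k, Nat.mod_lt _ hk, ?_⟩
  all_goals
    simp only [cornerLine, mem_filter, mem_Icc, Nat.mul_add_mod, and_true] at hp ⊢
    have := Nat.div_add_mod (p - 1) k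
    generalize k * ((p - 1) / k) = q at *
    omega

lemma eq_of_add_eq_add_of_modEq {i i' a a' : ℕ} (hi : i ≡ i' [MOD k]) (ha : a < k)
    (ha' : a' < k) (h : i + a = i' + a') : i = i' ∧ a = a' := by
  have : a = a' := (hi.add_left_cancel (h ▸ rfl)).eq_of_lt_of_lt ha ha'
  omega

lemma modEq_of_mem_cornerLine {m' i i' : ℕ} (hi : i ∈ cornerLine m k)
    (hi' : i' ∈ cornerLine m' k) : i ≡ i' [MOD k] := by
  simp only [cornerLine, mem_filter] at hi hi'
  exact hi.2.trans hi'.2.symm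

theorem sum_Icc_eq_sum_cornerLine {M : Type*} [AddCommMonoid M] (hk : 0 < k) (hm : k ∣ m)
    (f : ℕ → M) :
    ∑ p ∈ Icc 1 m, f p = ∑ i ∈ cornerLine m k, ∑ a ∈ range k, f (i + a) := by
  rw [← sum_product', ← sum_image (g := fun x : ℕ × ℕ => x.1 + x.2)]
  · congr 1
    ext p
    simp only [mem_image, mem_product, mem_range, Prod.exists]
    constructor
    · rintro hp
      obtain ⟨i, hi, a, ha, rfl⟩ := exists_mem_cornerLine_add_eq hk hp
      exact ⟨i, a, ⟨hi, ha⟩, rfl⟩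
    · rintro ⟨i, a, ⟨hi, ha⟩, rfl⟩
      exact add_mem_Icc_of_mem_cornerLine hm hi ha
  · rintro ⟨i, a⟩ hx ⟨i', a'⟩ hx' h
    simp only [mem_coe, mem_product, mem_range] at hx hx'
    obtain ⟨rfl, rfl⟩ :=
      eq_of_add_eq_add_of_modEq (modEq_of_mem_cornerLine hx.1 hx'.1) hx.2 hx'.2 h
    rfl

lemma mem_cornerPts {i j : ℕ} :
    (i, j) ∈ cornerPts m n k ↔ i ∈ cornerLine m k ∧ j ∈ cornerLine n k := by
  simp only [cornerPts, gridIcc, cornerLine, mem_filter, mem_product]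
  tauto

theorem sum_blockF {M : Type*} [AddCommMonoid M] (hk : 0 < k) (f : ℕ × ℕ → M) (i j : ℕ) :
    ∑ z ∈ blockF k i j, f z = ∑ a ∈ range k, ∑ b ∈ range k, f (i + a, j + b) := by
  have hIcc : ∀ i, Icc i (i + k - 1) = Ico i (i + k) := fun i => by
    ext; simp only [mem_Icc, mem_Ico]; omega
  simp only [blockF, sum_product, hIcc, sum_Ico_eq_sum_range, Nat.add_sub_cancel_left]

lemma sum_cornerLine_sum_blockF_left {M : Type*} [AddCommMonoid M] (hk : 0 < k) (hm : k ∣ m)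
    (ξ : ℕ × ℕ → M) (j : ℕ) :
    ∑ i ∈ cornerLine m k, ∑ z ∈ blockF k i j, ξ z =
      ∑ b ∈ range k, ∑ p ∈ Icc 1 m, ξ (p, j + b) := by
  simp only [sum_blockF hk, sum_Icc_eq_sum_cornerLine hk hm]
  calc _ = ∑ i ∈ cornerLine m k, ∑ b ∈ range k, ∑ a ∈ range k, ξ (i + a, j + b) :=
        sum_congr rfl fun i _ => sum_comm
    _ = _ := sum_comm

lemma sum_cornerLine_sum_blockF_right {M : Type*} [AddCommMonoid M] (hk : 0 < k) (hn : k ∣ n)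
    (ξ : ℕ × ℕ → M) (i : ℕ) :
    ∑ j ∈ cornerLine n k, ∑ z ∈ blockF k i j, ξ z =
      ∑ a ∈ range k, ∑ q ∈ Icc 1 n, ξ (i + a, q) := by
  simp only [sum_blockF hk, sum_Icc_eq_sum_cornerLine hk hn]
  exact sum_comm

end BlockIndexing

section BlockPlacement

variable {k m n : ℕ} (E : Finset (ℕ × ℕ)) (A B : ℕ × ℕ → ℕ)

def blockPlacement : Finset (ℕ × ℕ) := E.image fun w => (w.1 + A w, w.2 + B w)

variable {E A B}

lemma add_mem_blockPlacement_iff (hE : E ⊆ cornerPts m n k) (hA : ∀ w ∈ E, A w < k)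
    (hB : ∀ w ∈ E, B w < k) {i j a b : ℕ} (hi : i ∈ cornerLine m k)
    (hj : j ∈ cornerLine n k) (ha : a < k) (hb : b < k) :
    (i + a, j + b) ∈ blockPlacement E A B ↔ (i, j) ∈ E ∧ A (i, j) = a ∧ B (i, j) = b := by
  simp only [blockPlacement, mem_image, Prod.mk.injEq, Prod.exists]
  constructor
  · rintro ⟨i', j', hw, hi', hj'⟩
    obtain ⟨hi'm, hj'n⟩ := mem_cornerPts.1 (hE hw)
    obtain ⟨rfl, hai⟩ :=
      eq_of_add_eq_add_of_modEq (modEq_of_mem_cornerLine hi'm hi) (hA _ hw) ha hi'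
    obtain ⟨rfl, hbj⟩ :=
      eq_of_add_eq_add_of_modEq (modEq_of_mem_cornerLine hj'n hj) (hB _ hw) hb hj'
    exact ⟨hw, hai, hbj⟩
  · rintro ⟨hw, rfl, rfl⟩
    exact ⟨i, j, hw, rfl, rfl⟩

end BlockPlacement

section BlockPlacementSums

variable {k m n : ℕ} {E : Finset (ℕ × ℕ)} {A B : ℕ × ℕ → ℕ}
  (hE : E ⊆ cornerPts m n k) (hA : ∀ w ∈ E, A w < k) (hB : ∀ w ∈ E, B w < k)
include hE hA hB

lemma sum_blockPlacement_row (hk : 0 < k) (hm : k ∣ m) {j b : ℕ} (hj : j ∈ cornerLine n k)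
    (hb : b < k) :
    ∑ p ∈ Icc 1 m, (if (p, j + b) ∈ blockPlacement E A B then 1 else 0 : ℕ) =
      #{i ∈ cornerLine m k | (i, j) ∈ E ∧ B (i, j) = b} := by
  rw [sum_Icc_eq_sum_cornerLine hk hm, card_filter]
  refine sum_congr rfl fun i hi => ?_
  calc _ = ∑ a ∈ range k,
        (if (i, j) ∈ E ∧ A (i, j) = a ∧ B (i, j) = b then 1 else 0 : ℕ) :=
        sum_congr rfl fun a ha =>
          if_congr (add_mem_blockPlacement_iff hE hA hB hi hj (mem_range.1 ha) hb) rfl rfl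
    _ = _ := by
      by_cases hw : (i, j) ∈ E
      · simp [hw, ite_and, hA _ hw]
      · simp [hw]

lemma sum_blockPlacement_col (hk : 0 < k) (hn : k ∣ n) {i a : ℕ} (hi : i ∈ cornerLine m k)
    (ha : a < k) :
    ∑ q ∈ Icc 1 n, (if (i + a, q) ∈ blockPlacement E A B then 1 else 0 : ℕ) =
      #{j ∈ cornerLine n k | (i, j) ∈ E ∧ A (i, j) = a} := by
  rw [sum_Icc_eq_sum_cornerLine hk hn, card_filter]
  refine sum_congr rfl fun j hj => ?_
  calc _ = ∑ b ∈ range k,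
        (if (i, j) ∈ E ∧ A (i, j) = a ∧ B (i, j) = b then 1 else 0 : ℕ) :=
        sum_congr rfl fun b hb =>
          if_congr (add_mem_blockPlacement_iff hE hA hB hi hj ha (mem_range.1 hb)) rfl rfl
    _ = _ := by
      by_cases hw : (i, j) ∈ E
      · simp [hw, ite_and, hB _ hw]
      · simp [hw]

lemma sum_blockPlacement_blockF (hk : 0 < k) {i j : ℕ} (hi : i ∈ cornerLine m k)
    (hj : j ∈ cornerLine n k) :
    ∑ z ∈ blockF k i j, (if z ∈ blockPlacement E A B then 1 else 0 : ℕ) =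
      if (i, j) ∈ E then 1 else 0 := by
  rw [sum_blockF hk]
  calc _ = ∑ a ∈ range k, ∑ b ∈ range k,
        (if (i, j) ∈ E ∧ A (i, j) = a ∧ B (i, j) = b then 1 else 0 : ℕ) :=
        sum_congr rfl fun a ha => sum_congr rfl fun b hb => if_congr
          (add_mem_blockPlacement_iff hE hA hB hi hj (mem_range.1 ha) (mem_range.1 hb)) rfl rfl
    _ = _ := by
      by_cases hw : (i, j) ∈ E
      · simp [hw, ite_and, hA _ hw, hB _ hw]
      · simp [hw]

end BlockPlacementSums

theorem exists_binary_matrix_of_blockSums {k m n : ℕ} (hk : 0 < k) (hm : k ∣ m) (hn : k ∣ n)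
    (r c : ℕ → ℕ) (η : ℕ × ℕ → ℕ) (hη : ∀ w ∈ cornerPts m n k, η w ≤ 1)
    (hr : ∀ j ∈ cornerLine n k,
      ∑ i ∈ cornerLine m k, η (i, j) = ∑ l ∈ range k, r (j + l))
    (hc : ∀ i ∈ cornerLine m k,
      ∑ j ∈ cornerLine n k, η (i, j) = ∑ l ∈ range k, c (i + l)) :
    ∃ ξ : ℕ × ℕ → ℕ, (∀ z, ξ z ≤ 1) ∧
      (∀ q ∈ Icc 1 n, ∑ p ∈ Icc 1 m, ξ (p, q) = r q) ∧
      (∀ p ∈ Icc 1 m, ∑ q ∈ Icc 1 n, ξ (p, q) = c p) ∧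
      ∀ w ∈ cornerPts m n k, ∑ z ∈ blockF k w.1 w.2, ξ z = η w := by
  set E := {w ∈ cornerPts m n k | η w = 1}
  have hEη : ∀ i ∈ cornerLine m k, ∀ j ∈ cornerLine n k,
      (if (i, j) ∈ E then 1 else 0) = η (i, j) := fun i hi j hj => by
    have hw := mem_cornerPts.2 ⟨hi, hj⟩
    have := hη _ hw
    simp only [E, mem_filter, hw, true_and]
    split_ifs <;> omega
  obtain ⟨B, hB⟩ := exists_family_fiber_card_eq (cornerLine n k)
    (fun j => {i ∈ cornerLine m k | (i, j) ∈ E}) (range k) (fun j l => r (j + l))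
    fun j hj => by rw [card_filter, ← hr j hj]; exact sum_congr rfl fun i hi => hEη i hi j hj
  obtain ⟨A, hA⟩ := exists_family_fiber_card_eq (cornerLine m k)
    (fun i => {j ∈ cornerLine n k | (i, j) ∈ E}) (range k) (fun i l => c (i + l))
    fun i hi => by rw [card_filter, ← hc i hi]; exact sum_congr rfl fun j hj => hEη i hi j hj
  have hE : E ⊆ cornerPts m n k := filter_subset _ _
  have hA_lt : ∀ w ∈ E, A w.1 w.2 < k := fun w hw => by
    obtain ⟨hi, hj⟩ := mem_cornerPts.1 (hE hw)
    exact mem_range.1 ((hA w.1 hi).1 w.2 (mem_filter.2 ⟨hj, hw⟩))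
  have hB_lt : ∀ w ∈ E, B w.2 w.1 < k := fun w hw => by
    obtain ⟨hi, hj⟩ := mem_cornerPts.1 (hE hw)
    exact mem_range.1 ((hB w.2 hj).1 w.1 (mem_filter.2 ⟨hi, hw⟩))
  refine ⟨fun z => if z ∈ blockPlacement E (fun w => A w.1 w.2) (fun w => B w.2 w.1)
      then 1 else 0,
    fun z => by dsimp only; split_ifs <;> omega, fun q hq => ?_, fun p hp => ?_, fun w hw => ?_⟩
  · obtain ⟨j, hj, b, hb, rfl⟩ := exists_mem_cornerLine_add_eq hk hq
    rw [sum_blockPlacement_row hE hA_lt hB_lt hk hm hj hb, ← filter_filter]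
    exact (hB j hj).2 b (mem_range.2 hb)
  · obtain ⟨i, hi, a, ha, rfl⟩ := exists_mem_cornerLine_add_eq hk hp
    rw [sum_blockPlacement_col hE hA_lt hB_lt hk hn hi ha, ← filter_filter]
    exact (hA i hi).2 a (mem_range.2 ha)
  · obtain ⟨hi, hj⟩ := mem_cornerPts.1 hw
    exact (sum_blockPlacement_blockF hE hA_lt hB_lt hk hi hj).trans (hEη _ hi _ hj)

theorem stmt2_general (k m n : ℕ) (hk : 0 < k)
    (hm : k ∣ m) (hn : k ∣ n)
    (r c : ℕ → ℕ) (v : ℕ × ℕ → ℕ) (hv : ∀ p ∈ cornerPts m n k, v p = 0 ∨ v p = 1) :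
    (∃ ξ : ℕ × ℕ → ℕ,
      (∀ p ∈ gridIcc m n, ξ p ≤ 1) ∧
      (∀ q ∈ Finset.Icc 1 n, ∑ p ∈ Finset.Icc 1 m, ξ (p, q) = r q) ∧
      (∀ p ∈ Finset.Icc 1 m, ∑ q ∈ Finset.Icc 1 n, ξ (p, q) = c p) ∧
      (∀ w ∈ cornerPts m n k, ∑ z ∈ blockF k w.1 w.2, ξ z ≤ v w))
    ↔ (∃ η : ℕ × ℕ → ℕ,
      (∀ w ∈ cornerPts m n k, η w ≤ 1) ∧
      (∀ j ∈ cornerLine n k,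
        ∑ i ∈ cornerLine m k, η (i, j) = ∑ l ∈ Finset.range k, r (j + l)) ∧
      (∀ i ∈ cornerLine m k,
        ∑ j ∈ cornerLine n k, η (i, j) = ∑ l ∈ Finset.range k, c (i + l)) ∧
      (∀ w ∈ cornerPts m n k, v w = 0 → η w = 0)) := by
  constructor
  · rintro ⟨ξ, -, hr, hc, hblk⟩
    refine ⟨fun w => ∑ z ∈ blockF k w.1 w.2, ξ z, fun w hw => ?_, fun j hj => ?_,
      fun i hi => ?_, fun w hw hv0 => Nat.le_zero.1 (hv0 ▸ hblk w hw)⟩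
    · have := hblk w hw
      dsimp only
      rcases hv w hw with h | h <;> omega
    · rw [sum_cornerLine_sum_blockF_left hk hm]
      exact sum_congr rfl fun b hb => hr _ (add_mem_Icc_of_mem_cornerLine hn hj (mem_range.1 hb))
    · rw [sum_cornerLine_sum_blockF_right hk hn]
      exact sum_congr rfl fun a ha => hc _ (add_mem_Icc_of_mem_cornerLine hm hi (mem_range.1 ha))
  · rintro ⟨η, hη, hr, hc, hz⟩
    obtain ⟨ξ, hξ, hξr, hξc, hξblk⟩ :=
      exists_binary_matrix_of_blockSums hk hm hn r c η hη hr hc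
    refine ⟨ξ, fun z _ => hξ z, hξr, hξc, fun w hw => ?_⟩
    rw [hξblk w hw]
    rcases hv w hw with h | h
    · rw [hz w hw h, h]
    · exact h ▸ hη w hw

/-- existence of a binary matrix with given row/column sums and block constraints
`Σ_{B_k(i,j)} ξ ≤ v(i,j)` (with `v(i,j) ∈ {0,1}`) is equivalent to the feasibility of the
aggregated system (3.2) for the block indicators `η`. -/
theorem stmt2 (k m n : ℕ) (hk : 0 < k)
    (hm : k ∣ m) (hm0 : 0 < m) (hn : k ∣ n) (hn0 : 0 < n)
    (r c : ℕ → ℕ) (v : ℕ × ℕ → ℕ) (hv : ∀ p ∈ cornerPts m n k, v p = 0 ∨ v p = 1) :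
    (∃ ξ : ℕ × ℕ → ℕ,
      (∀ p ∈ gridIcc m n, ξ p ≤ 1) ∧
      (∀ q ∈ Finset.Icc 1 n, ∑ p ∈ Finset.Icc 1 m, ξ (p, q) = r q) ∧
      (∀ p ∈ Finset.Icc 1 m, ∑ q ∈ Finset.Icc 1 n, ξ (p, q) = c p) ∧
      (∀ w ∈ cornerPts m n k, ∑ z ∈ blockF k w.1 w.2, ξ z ≤ v w))
    ↔ (∃ η : ℕ × ℕ → ℕ,
      (∀ w ∈ cornerPts m n k, η w ≤ 1) ∧
      (∀ j ∈ cornerLine n k,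
        ∑ i ∈ cornerLine m k, η (i, j) = ∑ l ∈ Finset.range k, r (j + l)) ∧
      (∀ i ∈ cornerLine m k,
        ∑ j ∈ cornerLine n k, η (i, j) = ∑ l ∈ Finset.range k, c (i + l)) ∧
      (∀ w ∈ cornerPts m n k, v w = 0 → η w = 0)) :=
  stmt2_general k m n hk hm hn r c v hv
end

section
/- Let m, n, k ∈ ℕ with m, n ∈ kℕ. Consider the 0/1 matrix M with columns indexed by the cells (p,q) ∈ [m]×[n] and with the following rows: for each q ∈ [n], the indicator vector of the grid row [m]×{q}; for each p ∈ [m], the indicator vector of the grid column {p}×[n]; and for each (i,j) ∈ C(m,n,k) and each l ∈ [k−1]₀, the indicator vector of the box W(i,j+l) := B_k(i,j) ∩ ([m]×{j+l}). Then M is totally unimodular. -/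
open scoped Classical

/-- The box `W(i, j+l) = B_k(i,j) ∩ ([m] × {j+l})`. -/
def boxW (m k i j l : ℕ) : Finset (ℕ × ℕ) :=
  (blockF k i j).filter fun z => z.1 ∈ Finset.Icc 1 m ∧ z.2 = j + l

open Matrix

lemma signrange_iff (a : ℤ) :
    a ∈ Set.range (SignType.cast : SignType → ℤ) ↔ a = 0 ∨ a = 1 ∨ a = -1 := by
  constructor
  · rintro ⟨s, rfl⟩; cases s <;> simp
  · rintro (rfl | rfl | rfl)
    exacts [⟨0, rfl⟩, ⟨1, rfl⟩, ⟨-1, by norm_num⟩]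

lemma mem_boxW_iff {m k : ℕ} (hk : 0 < k) {i j : ℕ}
    (hi1 : 1 ≤ i) (hik : i % k = 1 % k) (hj1 : 1 ≤ j) (hjk : j % k = 1 % k)
    {p q l : ℕ} (hp : p < m) (hl : l < k) :
    ((p + 1, q + 1) ∈ boxW m k i j l) ↔
      (i = k * (p / k) + 1 ∧ j = k * (q / k) + 1 ∧ l = q % k) := by
  obtain ⟨a, ha⟩ : ∃ a, i = k * a + 1 := by
    obtain ⟨a, ha⟩ := (Nat.modEq_iff_dvd' hi1).mp hik.symm
    exact ⟨a, by omega⟩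
  obtain ⟨b, hb⟩ : ∃ b, j = k * b + 1 := by
    obtain ⟨b, hb⟩ := (Nat.modEq_iff_dvd' hj1).mp hjk.symm
    exact ⟨b, by omega⟩
  subst ha hb
  have ep : k * (p / k) + p % k = p := Nat.div_add_mod p k
  have epm : p % k < k := Nat.mod_lt _ hk
  have eq' : k * (q / k) + q % k = q := Nat.div_add_mod q k
  have eqm : q % k < k := Nat.mod_lt _ hk
  simp only [boxW, blockF, Finset.mem_filter, Finset.mem_product, Finset.mem_Icc]
  constructor
  · rintro ⟨⟨⟨h1, h2⟩, h3, h4⟩, ⟨h5, h6⟩, h7⟩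
    have hca : a * k = k * a := Nat.mul_comm a k
    have hcb : b * k = k * b := Nat.mul_comm b k
    have hca1 : (a + 1) * k = k * a + k := by ring
    have hcb1 : (b + 1) * k = k * b + k := by ring
    have hap : a = p / k := (Nat.div_eq_of_lt_le (by omega) (by omega)).symm
    have hbq : b = q / k := (Nat.div_eq_of_lt_le (by omega) (by omega)).symm
    subst hap hbq
    refine ⟨rfl, rfl, by omega⟩
  · rintro ⟨h1, h2, h3⟩
    have hpa : a = p / k := Nat.eq_of_mul_eq_mul_left hk (by omega)
    have hqb : b = q / k := Nat.eq_of_mul_eq_mul_left hk (by omega)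
    subst hpa hqb
    refine ⟨⟨⟨by omega, by omega⟩, by omega, by omega⟩, ⟨by omega, by omega⟩, by omega⟩

lemma corner_mem {m n k : ℕ} (hk : 0 < k) {p q : ℕ} (hp : p < m) (hq : q < n) :
    (k * (p / k) + 1, k * (q / k) + 1) ∈ cornerPts m n k := by
  have ep : k * (p / k) + p % k = p := Nat.div_add_mod p k
  have eq' : k * (q / k) + q % k = q := Nat.div_add_mod q k
  simp only [cornerPts, gridIcc, Finset.mem_filter, Finset.mem_product, Finset.mem_Icc]
  refine ⟨⟨⟨by omega, by omega⟩, by omega, by omega⟩, ?_, ?_⟩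
  · simpa using Nat.mul_add_mod k (p / k) 1
  · simpa using Nat.mul_add_mod k (q / k) 1

lemma det_zero_of_col_sums (r : ℕ) (A : Matrix (Fin r) (Fin r) ℤ) (hr : 0 < r)
    (h : ∀ j, ∑ i, A i j = 0) : A.det = 0 := by
  have hv : (fun _ => (1:ℤ)) ᵥ* A = 0 := by
    funext j
    simpa [Matrix.vecMul, dotProduct] using h j
  have h2 := congrArg (fun w => w ᵥ* A.adjugate) hv
  simp only [Matrix.vecMul_vecMul, Matrix.mul_adjugate] at h2
  have h3 := congrFun h2 ⟨0, hr⟩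
  simpa [Matrix.vecMul, dotProduct, Matrix.one_apply, Finset.sum_ite_eq] using h3

lemma detIncidence : ∀ (r : ℕ) (A : Matrix (Fin r) (Fin r) ℤ),
    (∀ i j, A i j = 0 ∨ A i j = 1 ∨ A i j = -1) →
    (∀ j i₁ i₂, A i₁ j = 1 → A i₂ j = 1 → i₁ = i₂) →
    (∀ j i₁ i₂, A i₁ j = -1 → A i₂ j = -1 → i₁ = i₂) →
    A.det ∈ Set.range (SignType.cast : SignType → ℤ) := by
  intro r
  induction r with
  | zero => intro A _ _ _; exact ⟨1, by simp [Matrix.det_fin_zero]⟩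
  | succ r ih =>
    intro A hv h1 h2
    by_cases hall : ∀ j, (∃ i, A i j = 1) ∧ (∃ i, A i j = -1)
    · rw [signrange_iff]
      left
      apply det_zero_of_col_sums _ _ (Nat.succ_pos r)
      intro j
      obtain ⟨⟨i1, hi1⟩, ⟨i2, hi2⟩⟩ := hall j
      have hne : i1 ≠ i2 := by rintro rfl; rw [hi1] at hi2; omega
      have hz : ∀ i ∈ Finset.univ, i ∉ ({i1, i2} : Finset (Fin (r+1))) → A i j = 0 := by
        intro i _ hi
        simp only [Finset.mem_insert, Finset.mem_singleton, not_or] at hi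
        rcases hv i j with h | h | h
        · exact h
        · exact absurd (h1 j i i1 h hi1) hi.1
        · exact absurd (h2 j i i2 h hi2) hi.2
      rw [← Finset.sum_subset (Finset.subset_univ {i1, i2}) hz,
        Finset.sum_pair hne, hi1, hi2]
      ring
    · push_neg at hall
      obtain ⟨j, hj⟩ := hall
      have huniq : ∀ i₁ i₂, A i₁ j ≠ 0 → A i₂ j ≠ 0 → i₁ = i₂ := by
        intro i₁ i₂ hn1 hn2
        by_cases hex : ∃ i, A i j = 1
        · have hno : ∀ i, A i j ≠ -1 := hj hex
          rcases hv i₁ j with h | h | h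
          · exact absurd h hn1
          · rcases hv i₂ j with h' | h' | h'
            · exact absurd h' hn2
            · exact h1 j i₁ i₂ h h'
            · exact absurd h' (hno i₂)
          · exact absurd h (hno i₁)
        · push_neg at hex
          rcases hv i₁ j with h | h | h
          · exact absurd h hn1
          · exact absurd h (hex i₁)
          · rcases hv i₂ j with h' | h' | h'
            · exact absurd h' hn2
            · exact absurd h' (hex i₂)
            · exact h2 j i₁ i₂ h h'
      by_cases hz : ∀ i, A i j = 0
      · exact ⟨0, (Matrix.det_eq_zero_of_column_eq_zero j hz).symm⟩
      · push_neg at hz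
        obtain ⟨i0, hi0⟩ := hz
        rw [Matrix.det_succ_column A j,
          Finset.sum_eq_single i0 (fun i _ hi => by
            have : A i j = 0 := by
              by_contra hne
              exact hi (huniq i i0 hne hi0)
            simp [this])
            (fun h => absurd (Finset.mem_univ i0) h)]
        have hminor := ih (A.submatrix i0.succAbove j.succAbove)
          (fun i' j' => hv _ _)
          (fun j' i₁ i₂ e1 e2 => Fin.succAbove_right_injective (h1 _ _ _ e1 e2))
          (fun j' i₁ i₂ e1 e2 => Fin.succAbove_right_injective (h2 _ _ _ e1 e2))
        rw [signrange_iff] at hminor ⊢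
        rcases neg_one_pow_eq_or ℤ ((i0 : ℕ) + (j : ℕ)) with hp | hp <;>
          rcases hv i0 j with h | h | h <;>
          rcases hminor with hm | hm | hm <;>
          simp [hp, h, hm] at hi0 ⊢

/-- The row-index type of the big matrix. -/
abbrev RowT (m n k : ℕ) := (Fin n) ⊕ (Fin m) ⊕ ({w : ℕ × ℕ // w ∈ cornerPts m n k} × Fin k)

/-- The row index of the (unique) box containing a given cell. -/
def boxR (m n k : ℕ) (hk : 0 < k) (pq : Fin m × Fin n) : RowT m n k :=
  Sum.inr (Sum.inr (⟨(k * ((pq.1 : ℕ) / k) + 1, k * ((pq.2 : ℕ) / k) + 1),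
    corner_mem hk pq.1.isLt pq.2.isLt⟩, ⟨(pq.2 : ℕ) % k, Nat.mod_lt _ hk⟩))

/-- Sign used on the diagonal: grid-column rows get `-1`. -/
def rsign {m n k : ℕ} : RowT m n k → ℤ :=
  Sum.elim (fun _ => 1) (Sum.elim (fun _ => -1) (fun _ => 1))

lemma rsign_mul_self {m n k : ℕ} (x : RowT m n k) : rsign x * rsign x = 1 := by
  rcases x with q | p | u <;> simp [rsign]

/-- `pRel f i t` : row `i` is the grid-row containing the box-row `t`. -/
def pRel {m n k r : ℕ} (f : Fin r → RowT m n k) (i t : Fin r) : Prop :=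
  ∃ q w l, f i = Sum.inl q ∧ f t = Sum.inr (Sum.inr (w, l)) ∧
    (w : ℕ × ℕ).2 + (l : ℕ) = (q : ℕ) + 1

noncomputable def NM {m n k r : ℕ} (f : Fin r → RowT m n k) : Matrix (Fin r) (Fin r) ℤ :=
  Matrix.of fun i t => if pRel f i t then -1 else 0

noncomputable def DM {m n k r : ℕ} (f : Fin r → RowT m n k) : Matrix (Fin r) (Fin r) ℤ :=
  Matrix.diagonal fun i => rsign (f i)

lemma boxR_iff (m n k : ℕ) (hk : 0 < k) (w : {w : ℕ × ℕ // w ∈ cornerPts m n k}) (l : Fin k)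
    (pq : Fin m × Fin n) :
    (((pq.1 : ℕ) + 1, (pq.2 : ℕ) + 1) ∈ boxW m k w.1.1 w.1.2 (l : ℕ)) ↔
      (Sum.inr (Sum.inr (w, l)) : RowT m n k) = boxR m n k hk pq := by
  have hw := w.2
  simp only [cornerPts, gridIcc, Finset.mem_filter, Finset.mem_product, Finset.mem_Icc] at hw
  obtain ⟨⟨⟨hi1, him⟩, hj1, hjn⟩, hik, hjk⟩ := hw
  rw [mem_boxW_iff hk hi1 hik hj1 hjk pq.1.isLt l.isLt]
  simp only [boxR, Sum.inr.injEq, Prod.mk.injEq, Subtype.ext_iff, Prod.ext_iff, Fin.ext_iff]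
  tauto

lemma boxR_parent (m n k : ℕ) (hk : 0 < k) (w : {w : ℕ × ℕ // w ∈ cornerPts m n k}) (l : Fin k)
    (pq : Fin m × Fin n)
    (h : (Sum.inr (Sum.inr (w, l)) : RowT m n k) = boxR m n k hk pq) :
    (w : ℕ × ℕ).2 + (l : ℕ) = (pq.2 : ℕ) + 1 := by
  simp only [boxR, Sum.inr.injEq, Prod.mk.injEq, Subtype.ext_iff, Prod.ext_iff, Fin.ext_iff] at h
  obtain ⟨⟨h1, h2⟩, h3⟩ := h
  have := Nat.div_add_mod ((pq.2 : ℕ)) k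
  omega

lemma pRel_iff_of {m n k r : ℕ} (hk : 0 < k) {f : Fin r → RowT m n k} {i t : Fin r}
    {q : Fin n} {pq : Fin m × Fin n}
    (hfi : f i = Sum.inl q) (ht : f t = boxR m n k hk pq) :
    pRel f i t ↔ pq.2 = q := by
  constructor
  · rintro ⟨q', w', l', hq', hw', hpar⟩
    have hqq : q' = q := by rw [hfi] at hq'; exact (Sum.inl.injEq _ _).mp hq'.symm ▸ rfl
    have hbb : (Sum.inr (Sum.inr (w', l')) : RowT m n k) = boxR m n k hk pq := by
      rw [← hw', ht]
    have := boxR_parent m n k hk w' l' pq hbb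
    subst hqq
    exact Fin.ext (by omega)
  · intro hq
    refine ⟨q, ⟨(k * ((pq.1 : ℕ) / k) + 1, k * ((pq.2 : ℕ) / k) + 1),
      corner_mem hk pq.1.isLt pq.2.isLt⟩, ⟨(pq.2 : ℕ) % k, Nat.mod_lt _ hk⟩, hfi, ht, ?_⟩
    have := Nat.div_add_mod ((pq.2 : ℕ)) k
    have : ((pq.2 : ℕ)) = (q : ℕ) := by rw [hq]
    simp only []
    have hd := Nat.div_add_mod ((pq.2 : ℕ)) k
    omega

lemma DM_mul_DM {m n k r : ℕ} (f : Fin r → RowT m n k) : DM f * DM f = 1 := by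
  rw [DM, Matrix.diagonal_mul_diagonal]
  simp only [rsign_mul_self]
  exact Matrix.diagonal_one

lemma DM_mul_NM {m n k r : ℕ} (f : Fin r → RowT m n k) : DM f * NM f = NM f := by
  ext i t
  rw [DM, Matrix.diagonal_mul]
  by_cases h : pRel f i t
  · obtain ⟨q, w, l, hq, hw, hpar⟩ := h
    rw [hq]
    simp [rsign]
  · simp [NM, h]

lemma NM_mul_DM {m n k r : ℕ} (f : Fin r → RowT m n k) : NM f * DM f = NM f := by
  ext i t
  rw [DM, Matrix.mul_diagonal]
  by_cases h : pRel f i t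
  · obtain ⟨q, w, l, hq, hw, hpar⟩ := h
    rw [hw]
    simp [rsign]
  · simp [NM, h]

lemma NM_mul_NM {m n k r : ℕ} (f : Fin r → RowT m n k) : NM f * NM f = 0 := by
  ext i j
  rw [Matrix.mul_apply]
  simp only [Matrix.zero_apply]
  apply Finset.sum_eq_zero
  intro t _
  by_cases h1 : pRel f i t
  · by_cases h2 : pRel f t j
    · obtain ⟨q, w, l, hq, hw, _⟩ := h1
      obtain ⟨q', w', l', hq', hw', _⟩ := h2
      rw [hw] at hq'
      simp at hq'
    · simp [NM, h2]
  · simp [NM, h1]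

lemma LMUL {m n k r : ℕ} (f : Fin r → RowT m n k) :
    (DM f + NM f) * (DM f - NM f) = 1 := by
  rw [Matrix.add_mul, Matrix.mul_sub, Matrix.mul_sub, DM_mul_DM, DM_mul_NM, NM_mul_DM,
    NM_mul_NM, sub_zero, sub_add_cancel]

lemma mainAux (m n k r : ℕ) (hk : 0 < k)
    (f : Fin r → RowT m n k) (hf : Function.Injective f)
    (g : Fin r → Fin m × Fin n)
    (B : Matrix (Fin r) (Fin r) ℤ)
    (hBrow : ∀ i (q : Fin n) j, f i = Sum.inl q → B i j = if (g j).2 = q then 1 else 0)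
    (hBcol : ∀ i (p : Fin m) j, f i = Sum.inr (Sum.inl p) → B i j = if (g j).1 = p then 1 else 0)
    (hBbox : ∀ i j, (∃ u, f i = Sum.inr (Sum.inr u)) →
      B i j = if f i = boxR m n k hk (g j) then 1 else 0) :
    B.det ∈ Set.range (SignType.cast : SignType → ℤ) := by
  set A := (DM f + NM f) * B with hA
  have hAentry : ∀ i j, A i j = rsign (f i) * B i j +
      ∑ t, (if pRel f i t then (-1:ℤ) else 0) * B t j := by
    intro i j
    rw [hA, Matrix.add_mul, Matrix.add_apply]
    congr 1
    rw [DM, Matrix.diagonal_mul]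
  -- the three row-shape lemmas for A
  have hArow : ∀ i (q : Fin n) j, f i = Sum.inl q →
      A i j = if ((g j).2 = q ∧ ¬ ∃ t, f t = boxR m n k hk (g j)) then 1 else 0 := by
    intro i q j hfi
    have hrs : rsign (f i) = 1 := by rw [hfi]; rfl
    rw [hAentry, hrs, one_mul, hBrow i q j hfi]
    by_cases hsel : ∃ t, f t = boxR m n k hk (g j)
    · obtain ⟨t₀, ht₀⟩ := hsel
      have hother : ∀ t ∈ Finset.univ, t ≠ t₀ →
          (if pRel f i t then (-1:ℤ) else 0) * B t j = 0 := by
        intro t _ htne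
        by_cases hP : pRel f i t
        · obtain ⟨q', w', l', hq', hw', hpar⟩ := hP
          have hBt : B t j = if f t = boxR m n k hk (g j) then 1 else 0 :=
            hBbox t j ⟨(w', l'), hw'⟩
          rw [hBt]
          by_cases hE : f t = boxR m n k hk (g j)
          · exact absurd (hf (hE.trans ht₀.symm)) htne
          · simp [hE]
        · simp [hP]
      have hsum : (∑ t, (if pRel f i t then (-1:ℤ) else 0) * B t j)
          = if (g j).2 = q then -1 else 0 := by
        rw [Finset.sum_eq_single t₀ hother (fun h => absurd (Finset.mem_univ t₀) h)]
        have hBt₀ : B t₀ j = 1 := by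
          rw [hBbox t₀ j ⟨_, ht₀⟩]
          simp [ht₀]
        by_cases hgq : (g j).2 = q
        · have hP : pRel f i t₀ := (pRel_iff_of hk hfi ht₀).mpr hgq
          simp [hP, hBt₀, hgq]
        · have hP : ¬ pRel f i t₀ := fun h => hgq ((pRel_iff_of hk hfi ht₀).mp h)
          simp [hP, hgq]
      rw [hsum]
      have hns : ¬ ((g j).2 = q ∧ ¬ ∃ t, f t = boxR m n k hk (g j)) := by
        rintro ⟨_, hno⟩; exact hno ⟨t₀, ht₀⟩
      rw [if_neg hns]
      by_cases hgq : (g j).2 = q <;> simp [hgq]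
    · have hsum : (∑ t, (if pRel f i t then (-1:ℤ) else 0) * B t j) = 0 := by
        apply Finset.sum_eq_zero
        intro t _
        by_cases hP : pRel f i t
        · obtain ⟨q', w', l', hq', hw', hpar⟩ := hP
          have hBt : B t j = if f t = boxR m n k hk (g j) then 1 else 0 :=
            hBbox t j ⟨(w', l'), hw'⟩
          rw [hBt]
          by_cases hE : f t = boxR m n k hk (g j)
          · exact absurd ⟨t, hE⟩ hsel
          · simp [hE]
        · simp [hP]
      rw [hsum, add_zero]
      by_cases hgq : (g j).2 = q <;> simp [hgq, hsel]
  have hnoP : ∀ i, (¬ ∃ q, f i = Sum.inl q) → ∀ j,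
      (∑ t, (if pRel f i t then (-1:ℤ) else 0) * B t j) = 0 := by
    intro i hni j
    apply Finset.sum_eq_zero
    intro t _
    by_cases hP : pRel f i t
    · obtain ⟨q', w', l', hq', _, _⟩ := hP
      exact absurd ⟨q', hq'⟩ hni
    · simp [hP]
  have hAcol : ∀ i (p : Fin m) j, f i = Sum.inr (Sum.inl p) →
      A i j = if (g j).1 = p then -1 else 0 := by
    intro i p j hfi
    have hrs : rsign (f i) = -1 := by rw [hfi]; rfl
    rw [hAentry, hrs, hnoP i (by rw [hfi]; rintro ⟨q, hq⟩; simp at hq) j, add_zero,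
      hBcol i p j hfi]
    by_cases hgp : (g j).1 = p <;> simp [hgp]
  have hAbox : ∀ i j, (∃ u, f i = Sum.inr (Sum.inr u)) →
      A i j = if f i = boxR m n k hk (g j) then 1 else 0 := by
    intro i j hu
    obtain ⟨u, hfi⟩ := hu
    have hrs : rsign (f i) = 1 := by rw [hfi]; rfl
    rw [hAentry, hrs, one_mul, hnoP i (by rw [hfi]; rintro ⟨q, hq⟩; simp at hq) j, add_zero,
      hBbox i j ⟨u, hfi⟩]
  -- hypotheses of detIncidence
  have hvals : ∀ i j, A i j = 0 ∨ A i j = 1 ∨ A i j = -1 := by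
    intro i j
    rcases hfi : f i with q | p | u
    · rw [hArow i q j hfi]; split_ifs <;> simp
    · rw [hAcol i p j hfi]; split_ifs <;> simp
    · rw [hAbox i j ⟨u, hfi⟩]; split_ifs <;> simp
  have hplus : ∀ j i, A i j = 1 →
      (f i = Sum.inl (g j).2 ∧ ¬ ∃ t, f t = boxR m n k hk (g j)) ∨
        f i = boxR m n k hk (g j) := by
    intro j i h
    rcases hfi : f i with q | p | u
    · rw [hArow i q j hfi] at h
      split_ifs at h with hc
      · exact Or.inl ⟨congrArg Sum.inl hc.1.symm, hc.2⟩
      · exact absurd h.symm (by norm_num)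
    · rw [hAcol i p j hfi] at h
      split_ifs at h <;> norm_num at h
    · rw [hAbox i j ⟨u, hfi⟩] at h
      split_ifs at h with hc
      · exact Or.inr (hfi.symm.trans hc)
      · exact absurd h.symm (by norm_num)
  have hminus : ∀ j i, A i j = -1 → f i = Sum.inr (Sum.inl (g j).1) := by
    intro j i h
    rcases hfi : f i with q | p | u
    · rw [hArow i q j hfi] at h; split_ifs at h <;> norm_num at h
    · rw [hAcol i p j hfi] at h
      split_ifs at h with hc
      rw [hc]
    · rw [hAbox i j ⟨u, hfi⟩] at h; split_ifs at h <;> norm_num at h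
  have hdetA := detIncidence r A hvals
    (fun j i₁ i₂ e1 e2 => by
      rcases hplus j i₁ e1 with ⟨ha1, hn1⟩ | hb1 <;>
        rcases hplus j i₂ e2 with ⟨ha2, hn2⟩ | hb2
      · exact hf (ha1.trans ha2.symm)
      · exact absurd ⟨i₂, hb2⟩ hn1
      · exact absurd ⟨i₁, hb1⟩ hn2
      · exact hf (hb1.trans hb2.symm))
    (fun j i₁ i₂ e1 e2 => hf ((hminus j i₁ e1).trans (hminus j i₂ e2).symm))
  -- invertibility bookkeeping
  have hLL' : (DM f + NM f) * (DM f - NM f) = 1 := LMUL f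
  have hL'L : (DM f - NM f) * (DM f + NM f) = 1 := mul_eq_one_comm.mp hLL'
  have hBfact : B = (DM f - NM f) * A := by
    rw [hA, ← Matrix.mul_assoc, hL'L, Matrix.one_mul]
  have hdetB : B.det = (DM f - NM f).det * A.det := by rw [hBfact, Matrix.det_mul]
  have hu : (DM f - NM f).det * (DM f + NM f).det = 1 := by
    rw [← Matrix.det_mul, hL'L, Matrix.det_one]
  rw [signrange_iff] at hdetA ⊢
  rcases Int.eq_one_or_neg_one_of_mul_eq_one' hu with ⟨h, _⟩ | ⟨h, _⟩ <;>
    rcases hdetA with h' | h' | h' <;> rw [hdetB, h, h'] <;> norm_num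


/-- the 0/1 matrix whose columns are indexed by the cells of the grid `[m] × [n]`
(cell `(p,q)` being represented by `(p-1, q-1) : Fin m × Fin n`) and whose rows are the
indicator vectors of the grid rows, of the grid columns, and of the boxes `W(i,j+l)` for
`(i,j) ∈ C(m,n,k)` and `l ∈ [k-1]₀`, is totally unimodular. -/
theorem stmt4 (m n k : ℕ) (hk : 0 < k)
    (hm : k ∣ m) (hm0 : 0 < m) (hn : k ∣ n) (hn0 : 0 < n)
    (M : Matrix ((Fin n) ⊕ (Fin m) ⊕ ({w : ℕ × ℕ // w ∈ cornerPts m n k} × Fin k))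
          (Fin m × Fin n) ℤ)
    (hrow : ∀ q₀ : Fin n, ∀ pq : Fin m × Fin n,
      M (Sum.inl q₀) pq = if pq.2 = q₀ then 1 else 0)
    (hcol : ∀ p₀ : Fin m, ∀ pq : Fin m × Fin n,
      M (Sum.inr (Sum.inl p₀)) pq = if pq.1 = p₀ then 1 else 0)
    (hbox : ∀ w : {w : ℕ × ℕ // w ∈ cornerPts m n k}, ∀ l : Fin k, ∀ pq : Fin m × Fin n,
      M (Sum.inr (Sum.inr (w, l))) pq =
        if ((pq.1 : ℕ) + 1, (pq.2 : ℕ) + 1) ∈ boxW m k w.1.1 w.1.2 l then 1 else 0) :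
    M.IsTotallyUnimodular := by

  intro r f g hf hg
  apply mainAux m n k r hk f hf g (M.submatrix f g)
  · intro i q j h
    rw [Matrix.submatrix_apply, h, hrow q (g j)]
  · intro i p j h
    rw [Matrix.submatrix_apply, h, hcol p (g j)]
  · intro i j hu
    obtain ⟨⟨w, l⟩, hu⟩ := hu
    rw [Matrix.submatrix_apply, hu, hbox w l (g j),
      if_congr (boxR_iff m n k hk w l (g j)) rfl rfl, ← hu]
end

section
/- (Zero padding T2.) Let k ≥ 2, m, n ∈ 2ℕ, let r_1,…,r_n, c_1,…,c_m ∈ ℕ₀, and for each (i,j) ∈ C(m,n,2) let ∼_{i,j} ∈ {≤, ≥, =} be a relation and v(i,j) ∈ ℕ₀. Set m' := mk/2 and n' := nk/2, and define r'_1,…,r'_{n'} by r'_{(k/2)(j−1)+1} := r_j and r'_{(k/2)(j−1)+2} := r_{j+1} for each odd j ∈ [n], and r'_s := 0 for all remaining indices s ∈ [n']; define c'_1,…,c'_{m'} analogously from c. Then there exists a binary matrix ξ on [m]×[n] with row sums r, column sums c, and Σ_{(p,q)∈B_2(i,j)} ξ_{p,q} ∼_{i,j} v(i,j) for all (i,j)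 ∈ C(m,n,2), if and only if there exists a binary matrix ξ' on [m']×[n'] with row sums r', column sums c', and Σ_{(p,q)∈B_k(i',j')} ξ'_{p,q} ∼_{i,j} v(i,j) for all (i,j) ∈ C(m,n,2), where (i',j') := ((k/2)(i−1)+1, (k/2)(j−1)+1); the map (i,j) ↦ (i',j') is a bijection from C(m,n,2) onto C(m',n',k). -/
open scoped Classical

/-- A comparison relation `∼ ∈ {≤, ≥, =}`. -/
inductive CmpRel : Type
  | le : CmpRel
  | ge : CmpRel
  | eq : CmpRel

/-- The relation `a ∼ b`. -/
def CmpRel.holds : CmpRel → ℕ → ℕ → Prop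
  | .le, a, b => a ≤ b
  | .ge, a, b => a ≥ b
  | .eq, a, b => a = b

/-- Zero-padded measurements (T2): the index `s = (k/2)(j−1) + 1 + l` with `j` odd and
`l ∈ [k-1]₀` gets the value `r j` if `l = 0`, `r (j+1)` if `l = 1`, and `0` otherwise. -/
def pad0 (k : ℕ) (r : ℕ → ℕ) (s : ℕ) : ℕ :=
  if (s - 1) % k = 0 then r (2 * ((s - 1) / k) + 1)
  else if (s - 1) % k = 1 then r (2 * ((s - 1) / k) + 2)
  else 0

/-- The corner map `(i,j) ↦ (i',j') = ((k/2)(i−1)+1, (k/2)(j−1)+1)`. -/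
def cornerMap (k : ℕ) (w : ℕ × ℕ) : ℕ × ℕ :=
  (k * (w.1 - 1) / 2 + 1, k * (w.2 - 1) / 2 + 1)

/-!
Write the old indices as `2u + 1 + e` with `e ∈ {0, 1}`; padding moves them to `ku + 1 + e`.
Every other row and column of the padded instance has prescribed sum `0`, so a padded solution
vanishes off the image of this embedding; hence restricting a padded solution along it, and
extending an original solution by zero, both give solutions. Row, column and block sums only see
the image cells, and the image of the `2 × 2` block at `(2u + 1, 2v + 1)` is exactly the set of image cells
of the `k × k` block at `(ku + 1, kv + 1)`.
-/

open Finset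

namespace Finset

variable {α β M : Type*} [DecidableEq β] {S : Finset β} {T : Finset α} {f : α → β}
  {p : β → Prop} [DecidablePred p]

lemma forall_mem_iff_of_image_eq_filter (himage : T.image f = S.filter p) {P : β → Prop}
    (hP : ∀ s ∈ S, ¬ p s → P s) : (∀ s ∈ S, P s) ↔ ∀ t ∈ T, P (f t) := by
  rw [← forall_mem_image (f := f), himage]
  simp only [mem_filter, and_imp]
  exact ⟨fun h s hs _ => h s hs, fun h s hs => if hps : p s then h s hs hps else hP s hs hps⟩

lemma sum_eq_sum_of_image_eq_filter [AddCommMonoid M] (himage : T.image f = S.filter p)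
    (hf : Set.InjOn f T) {g : β → M} (hg : ∀ s ∈ S, ¬ p s → g s = 0) :
    ∑ s ∈ S, g s = ∑ t ∈ T, g (f t) := by
  rw [← sum_filter_of_ne fun s hs hne => by_contra fun hps => hne (hg s hs hps), ← himage,
    sum_image hf]

end Finset

namespace ZeroPadding

variable {k : ℕ}

/-- Sends `2u + 1 + e` to `ku + 1 + e` for `e ≤ 1`; this closed form is strictly monotone on all
of `ℕ`, so it is injective without side conditions. -/
def padIdx (k p : ℕ) : ℕ := p + (k - 2) * ((p - 1) / 2)

/-- The indices in the image of `padIdx`; all other padded rows and columns have sum `0`. -/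
def IsLive (k s : ℕ) : Prop := (s - 1) % k ≤ 1

lemma exists_eq_two_mul_add {p : ℕ} (hp : 1 ≤ p) : ∃ u e, e ≤ 1 ∧ p = 2 * u + 1 + e :=
  ⟨(p - 1) / 2, (p - 1) % 2, by omega, by omega⟩

lemma mul_add_one_add_sub_one_mod {e : ℕ} (he : e < k) (u : ℕ) : (k * u + 1 + e - 1) % k = e := by
  rw [show k * u + 1 + e - 1 = e + k * u by omega, Nat.add_mul_mod_self_left, Nat.mod_eq_of_lt he]

lemma mul_add_one_add_sub_one_div {e : ℕ} (he : e < k) (u : ℕ) : (k * u + 1 + e - 1) / k = u := by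
  rw [show k * u + 1 + e - 1 = e + k * u by omega, Nat.add_mul_div_left _ _ (by omega),
    Nat.div_eq_of_lt he, zero_add]

lemma padIdx_strictMono : StrictMono (padIdx k) := fun p q hpq => by
  have := Nat.mul_le_mul_left (k - 2) (show (p - 1) / 2 ≤ (q - 1) / 2 by omega)
  unfold padIdx
  omega

lemma injective_prodMap_padIdx : Function.Injective (Prod.map (padIdx k) (padIdx k)) :=
  padIdx_strictMono.injective.prodMap padIdx_strictMono.injective

lemma padIdx_two_mul_add (hk : 2 ≤ k) (u e : ℕ) (he : e ≤ 1) :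
    padIdx k (2 * u + 1 + e) = k * u + 1 + e := by
  obtain ⟨j, rfl⟩ : ∃ j, k = j + 2 := ⟨k - 2, by omega⟩
  rw [padIdx, show (2 * u + 1 + e - 1) / 2 = u by omega, Nat.add_sub_cancel]
  ring

lemma isLive_mul_add (hk : 2 ≤ k) (u e : ℕ) (he : e ≤ 1) : IsLive k (k * u + 1 + e) := by
  rw [IsLive, mul_add_one_add_sub_one_mod (by omega)]
  exact he

lemma isLive_padIdx (hk : 2 ≤ k) (p : ℕ) : IsLive k (padIdx k p) := by
  rcases Nat.eq_zero_or_pos p with rfl | hp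
  · simp [padIdx, IsLive]
  · obtain ⟨u, e, he, rfl⟩ := exists_eq_two_mul_add hp
    rw [padIdx_two_mul_add hk u e he]
    exact isLive_mul_add hk u e he

lemma image_padIdx_Icc (hk : 2 ≤ k) (a b : ℕ) :
    (Icc (2 * a + 1) (2 * b)).image (padIdx k) = (Icc (k * a + 1) (k * b)).filter (IsLive k) := by
  ext s
  simp only [mem_image, mem_filter, mem_Icc]
  constructor
  · rintro ⟨p, hp, rfl⟩
    obtain ⟨u, e, he, rfl⟩ := exists_eq_two_mul_add (show 1 ≤ p by omega)
    have hau : k * a ≤ k * u := Nat.mul_le_mul_left k (by omega)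
    have hub : k * (u + 1) ≤ k * b := Nat.mul_le_mul_left k (by omega)
    rw [padIdx_two_mul_add hk u e he, mul_add] at *
    exact ⟨⟨by omega, by omega⟩, isLive_mul_add hk u e he⟩
  · rintro ⟨hs, hlive⟩
    have hlive' : (s - 1) % k ≤ 1 := hlive
    have hdiv := Nat.div_add_mod (s - 1) k
    set u := (s - 1) / k
    have hau : a ≤ u := (Nat.le_div_iff_mul_le (by omega)).2 (by rw [mul_comm]; omega)
    have hub : u < b := (Nat.div_lt_iff_lt_mul (by omega)).2 (by rw [mul_comm]; omega)
    refine ⟨2 * u + 1 + (s - 1) % k, by omega, ?_⟩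
    rw [padIdx_two_mul_add hk u _ hlive]
    omega

lemma image_prodMap_padIdx (hk : 2 ≤ k) (a b c d : ℕ) :
    (Icc (2 * a + 1) (2 * b) ×ˢ Icc (2 * c + 1) (2 * d)).image (Prod.map (padIdx k) (padIdx k))
      = (Icc (k * a + 1) (k * b) ×ˢ Icc (k * c + 1) (k * d)).filter
          (fun z => IsLive k z.1 ∧ IsLive k z.2) := by
  rw [prodMap_image_product, filter_product, image_padIdx_Icc hk, image_padIdx_Icc hk]

lemma image_gridIcc_padIdx (hk : 2 ≤ k) (a b : ℕ) :
    (gridIcc (2 * a) (2 * b)).image (Prod.map (padIdx k) (padIdx k))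
      = (gridIcc (k * a) (k * b)).filter (fun z => IsLive k z.1 ∧ IsLive k z.2) := by
  simpa [gridIcc] using image_prodMap_padIdx hk 0 a 0 b

lemma pad0_padIdx (hk : 2 ≤ k) (r : ℕ → ℕ) {q : ℕ} (hq : 1 ≤ q) :
    pad0 k r (padIdx k q) = r q := by
  obtain ⟨u, e, he, rfl⟩ := exists_eq_two_mul_add hq
  have hmod := mul_add_one_add_sub_one_mod (show e < k by omega) u
  have hdiv := mul_add_one_add_sub_one_div (show e < k by omega) u
  rw [padIdx_two_mul_add hk u e he, pad0, hmod, hdiv]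
  rcases Nat.le_one_iff_eq_zero_or_eq_one.1 he with rfl | rfl <;> simp

lemma pad0_of_not_isLive (r : ℕ → ℕ) {s : ℕ} (hs : ¬ IsLive k s) : pad0 k r s = 0 := by
  rw [IsLive] at hs
  rw [pad0, if_neg (by omega), if_neg (by omega)]

lemma filter_Icc_mod_eq_one (hk : 0 < k) (a : ℕ) :
    (Icc 1 (k * a)).filter (fun x => x % k = 1 % k) = (range a).image (k * · + 1) := by
  ext x
  simp only [mem_filter, mem_Icc, mem_image, mem_range]
  constructor
  · rintro ⟨⟨hx1, hxa⟩, hmod⟩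
    have hx : k * ((x - 1) / k) = x - 1 :=
      Nat.mul_div_cancel' (Nat.dvd_of_mod_eq_zero (Nat.sub_mod_eq_zero_of_mod_eq hmod))
    exact ⟨(x - 1) / k, (Nat.div_lt_iff_lt_mul hk).2 (by rw [mul_comm]; omega), by omega⟩
  · rintro ⟨u, hu, rfl⟩
    have : k * (u + 1) ≤ k * a := Nat.mul_le_mul_left k hu
    refine ⟨⟨by omega, by rw [mul_add] at this; omega⟩, ?_⟩
    rw [add_comm, Nat.add_mul_mod_self_left]

lemma cornerPts_mul (hk : 0 < k) (a b : ℕ) :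
    cornerPts (k * a) (k * b) k
      = (range a ×ˢ range b).image (Prod.map (k * · + 1) (k * · + 1)) := by
  rw [prodMap_image_product, ← filter_Icc_mod_eq_one hk, ← filter_Icc_mod_eq_one hk,
    ← filter_product, cornerPts, gridIcc]

lemma cornerMap_two_mul_add_one (u v : ℕ) :
    cornerMap k (2 * u + 1, 2 * v + 1) = (k * u + 1, k * v + 1) := by
  simp [cornerMap, Nat.mul_left_comm k 2]

lemma image_cornerMap (hk : 2 ≤ k) (a b : ℕ) :
    (cornerPts (2 * a) (2 * b) 2).image (cornerMap k) = cornerPts (k * a) (k * b) k := by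
  rw [cornerPts_mul two_pos, cornerPts_mul (by omega), image_image]
  congr 1
  funext uv
  exact cornerMap_two_mul_add_one uv.1 uv.2

lemma injOn_cornerMap (hk : 0 < k) (a b : ℕ) :
    Set.InjOn (cornerMap k) (cornerPts (2 * a) (2 * b) 2) := by
  rw [cornerPts_mul two_pos, coe_image]
  rintro _ ⟨⟨u, v⟩, -, rfl⟩ _ ⟨⟨u', v'⟩, -, rfl⟩ h
  simp only [Prod.map, cornerMap_two_mul_add_one, Prod.mk.injEq, add_left_inj,
    Nat.mul_left_cancel_iff hk] at h
  rw [h.1, h.2]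

lemma blockF_mul_add_one (hk : 0 < k) (u v : ℕ) :
    blockF k (k * u + 1) (k * v + 1)
      = Icc (k * u + 1) (k * (u + 1)) ×ˢ Icc (k * v + 1) (k * (v + 1)) := by
  simp only [blockF, mul_add, mul_one]
  congr 2 <;> omega

/-- The constraint indexed by `w ∈ C` concerns the `b × b` block with corner `σ w`. -/
def IsBlockSolution (m n b : ℕ) (r c : ℕ → ℕ) (C : Finset (ℕ × ℕ)) (σ : ℕ × ℕ → ℕ × ℕ)
    (rel : ℕ × ℕ → CmpRel) (v : ℕ × ℕ → ℕ) (ξ : ℕ × ℕ → ℕ) : Prop :=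
  (∀ p ∈ gridIcc m n, ξ p ≤ 1) ∧
  (∀ q ∈ Icc 1 n, ∑ p ∈ Icc 1 m, ξ (p, q) = r q) ∧
  (∀ p ∈ Icc 1 m, ∑ q ∈ Icc 1 n, ξ (p, q) = c p) ∧
  ∀ w ∈ C, (rel w).holds (∑ z ∈ blockF b (σ w).1 (σ w).2, ξ z) (v w)

lemma forall_sum_eq_pad0_iff (hk : 2 ≤ k) (a b : ℕ) (r : ℕ → ℕ) (F : ℕ → ℕ → ℕ)
    (hF : ∀ t ∈ Icc 1 (k * b), ∀ s ∈ Icc 1 (k * a), ¬ (IsLive k s ∧ IsLive k t) → F t s = 0) :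
    (∀ q ∈ Icc 1 (2 * b), ∑ p ∈ Icc 1 (2 * a), F (padIdx k q) (padIdx k p) = r q) ↔
      ∀ t ∈ Icc 1 (k * b), ∑ s ∈ Icc 1 (k * a), F t s = pad0 k r t := by
  have himage (a : ℕ) : (Icc 1 (2 * a)).image (padIdx k) = (Icc 1 (k * a)).filter (IsLive k) := by
    simpa using image_padIdx_Icc hk 0 a
  refine Iff.trans ?_ (forall_mem_iff_of_image_eq_filter (himage b) fun t ht hdead => ?_).symm
  · refine forall₂_congr fun q hq => ?_
    have hq' : padIdx k q ∈ Icc 1 (k * b) := (mem_filter.1 (himage b ▸ mem_image_of_mem _ hq)).1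
    rw [sum_eq_sum_of_image_eq_filter (himage a) padIdx_strictMono.injective.injOn
      fun s hs hdead => hF _ hq' s hs fun h => hdead h.1, pad0_padIdx hk r (mem_Icc.1 hq).1]
  · rw [pad0_of_not_isLive r hdead]
    exact sum_eq_zero fun s hs => hF t ht s hs fun h => hdead h.2

lemma sum_blockF_cornerMap (hk : 2 ≤ k) {a b u v : ℕ} (hu : u < a) (hv : v < b)
    (ξ : ℕ × ℕ → ℕ)
    (hξ : ∀ z ∈ gridIcc (k * a) (k * b), ¬ (IsLive k z.1 ∧ IsLive k z.2) → ξ z = 0) :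
    ∑ z ∈ blockF k (cornerMap k (2 * u + 1, 2 * v + 1)).1 (cornerMap k (2 * u + 1, 2 * v + 1)).2,
        ξ z
      = ∑ z ∈ blockF 2 (2 * u + 1) (2 * v + 1), ξ (Prod.map (padIdx k) (padIdx k) z) := by
  have hua : k * (u + 1) ≤ k * a := Nat.mul_le_mul_left k hu
  have hvb : k * (v + 1) ≤ k * b := Nat.mul_le_mul_left k hv
  rw [cornerMap_two_mul_add_one, blockF_mul_add_one (by omega), blockF_mul_add_one two_pos]
  refine sum_eq_sum_of_image_eq_filter (image_prodMap_padIdx hk u (u + 1) v (v + 1))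
    injective_prodMap_padIdx.injOn fun z hz hdead => hξ z ?_ hdead
  simp only [gridIcc, mem_product, mem_Icc] at hz ⊢
  omega

theorem isBlockSolution_comp_padIdx_iff (hk : 2 ≤ k) (a b : ℕ) (r c : ℕ → ℕ)
    (rel : ℕ × ℕ → CmpRel) (v : ℕ × ℕ → ℕ) (ξ : ℕ × ℕ → ℕ)
    (hξ : ∀ z ∈ gridIcc (k * a) (k * b), ¬ (IsLive k z.1 ∧ IsLive k z.2) → ξ z = 0) :
    IsBlockSolution (2 * a) (2 * b) 2 r c (cornerPts (2 * a) (2 * b) 2) id rel v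
        (ξ ∘ Prod.map (padIdx k) (padIdx k)) ↔
      IsBlockSolution (k * a) (k * b) k (pad0 k r) (pad0 k c) (cornerPts (2 * a) (2 * b) 2)
        (cornerMap k) rel v ξ := by
  refine and_congr ?_ (and_congr ?_ (and_congr ?_ ?_))
  · exact (forall_mem_iff_of_image_eq_filter (image_gridIcc_padIdx hk a b)
      fun z hz hdead => (hξ z hz hdead).trans_le zero_le_one).symm
  · exact forall_sum_eq_pad0_iff hk a b r (fun t s => ξ (s, t))
      fun t ht s hs hdead => hξ (s, t) (mk_mem_product hs ht) hdead
  · exact forall_sum_eq_pad0_iff hk b a c (fun s t => ξ (s, t))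
      fun s hs t ht hdead => hξ (s, t) (mk_mem_product hs ht) (hdead ∘ And.symm)
  · refine forall₂_congr fun w hw => ?_
    rw [cornerPts_mul two_pos] at hw
    obtain ⟨⟨u, v⟩, huv, rfl⟩ := mem_image.1 hw
    simp only [mem_product, mem_range] at huv
    simp only [Prod.map_apply, id_eq, Function.comp_apply]
    rw [sum_blockF_cornerMap hk huv.1 huv.2 ξ hξ]

lemma IsBlockSolution.eq_zero_of_not_isLive {m n : ℕ} {r c : ℕ → ℕ} {C : Finset (ℕ × ℕ)}
    {σ : ℕ × ℕ → ℕ × ℕ} {rel : ℕ × ℕ → CmpRel} {v : ℕ × ℕ → ℕ} {ξ : ℕ × ℕ → ℕ}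
    (h : IsBlockSolution m n k (pad0 k r) (pad0 k c) C σ rel v ξ) :
    ∀ z ∈ gridIcc m n, ¬ (IsLive k z.1 ∧ IsLive k z.2) → ξ z = 0 := by
  rintro ⟨s, t⟩ hz hdead
  rw [gridIcc, mem_product] at hz
  rcases not_and_or.1 hdead with hs | ht
  · have hsum := h.2.2.1 s hz.1
    rw [pad0_of_not_isLive c hs, sum_eq_zero_iff] at hsum
    exact hsum t hz.2
  · have hsum := h.2.1 t hz.2
    rw [pad0_of_not_isLive r ht, sum_eq_zero_iff] at hsum
    exact hsum s hz.1

theorem exists_isBlockSolution_iff_padded (hk : 2 ≤ k) (a b : ℕ) (r c : ℕ → ℕ)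
    (rel : ℕ × ℕ → CmpRel) (v : ℕ × ℕ → ℕ) :
    (∃ ξ, IsBlockSolution (2 * a) (2 * b) 2 r c (cornerPts (2 * a) (2 * b) 2) id rel v ξ) ↔
      ∃ ξ, IsBlockSolution (k * a) (k * b) k (pad0 k r) (pad0 k c)
        (cornerPts (2 * a) (2 * b) 2) (cornerMap k) rel v ξ := by
  constructor
  · rintro ⟨ξ, hξ⟩
    let ξ' := Function.extend (Prod.map (padIdx k) (padIdx k)) ξ 0
    have hcomp : ξ' ∘ Prod.map (padIdx k) (padIdx k) = ξ :=
      funext (injective_prodMap_padIdx.extend_apply ξ 0)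
    have hdead (z : ℕ × ℕ) (hz : ¬ (IsLive k z.1 ∧ IsLive k z.2)) : ξ' z = 0 :=
      Function.extend_apply' _ _ _ fun ⟨⟨p, q⟩, hpq⟩ =>
        hz (hpq ▸ ⟨isLive_padIdx hk p, isLive_padIdx hk q⟩)
    exact ⟨ξ', (isBlockSolution_comp_padIdx_iff hk a b r c rel v ξ' fun z _ => hdead z).1
      (hcomp ▸ hξ)⟩
  · rintro ⟨ξ, hξ⟩
    exact ⟨_, (isBlockSolution_comp_padIdx_iff hk a b r c rel v ξ hξ.eq_zero_of_not_isLive).2 hξ⟩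

end ZeroPadding

theorem stmt7_general (k m n : ℕ) (hk : 2 ≤ k)
    (hm : 2 ∣ m) (hn : 2 ∣ n)
    (r c : ℕ → ℕ) (rel : ℕ × ℕ → CmpRel) (v : ℕ × ℕ → ℕ) :
    ((∃ ξ : ℕ × ℕ → ℕ,
      (∀ p ∈ gridIcc m n, ξ p ≤ 1) ∧
      (∀ q ∈ Finset.Icc 1 n, ∑ p ∈ Finset.Icc 1 m, ξ (p, q) = r q) ∧
      (∀ p ∈ Finset.Icc 1 m, ∑ q ∈ Finset.Icc 1 n, ξ (p, q) = c p) ∧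
      (∀ w ∈ cornerPts m n 2, (rel w).holds (∑ z ∈ blockF 2 w.1 w.2, ξ z) (v w)))
    ↔ (∃ ξ' : ℕ × ℕ → ℕ,
      (∀ p ∈ gridIcc (m * k / 2) (n * k / 2), ξ' p ≤ 1) ∧
      (∀ q ∈ Finset.Icc 1 (n * k / 2),
        ∑ p ∈ Finset.Icc 1 (m * k / 2), ξ' (p, q) = pad0 k r q) ∧
      (∀ p ∈ Finset.Icc 1 (m * k / 2),
        ∑ q ∈ Finset.Icc 1 (n * k / 2), ξ' (p, q) = pad0 k c p) ∧
      (∀ w ∈ cornerPts m n 2, (rel w).holds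
        (∑ z ∈ blockF k (cornerMap k w).1 (cornerMap k w).2, ξ' z) (v w))))
    ∧ (cornerPts m n 2).image (cornerMap k) = cornerPts (m * k / 2) (n * k / 2) k
    ∧ Set.InjOn (cornerMap k) ↑(cornerPts m n 2) := by
  obtain ⟨a, rfl⟩ := hm
  obtain ⟨b, rfl⟩ := hn
  have hhalf (x : ℕ) : 2 * x * k / 2 = k * x := by
    rw [mul_assoc, Nat.mul_div_cancel_left _ two_pos, mul_comm]
  rw [hhalf, hhalf]
  exact ⟨ZeroPadding.exists_isBlockSolution_iff_padded hk a b r c rel v,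
    ZeroPadding.image_cornerMap hk a b, ZeroPadding.injOn_cornerMap (by omega) a b⟩

/-- zero padding T2: the original instance on `[m] × [n]` with `2 × 2` blocks is
solvable iff the zero-padded instance on `[mk/2] × [nk/2]` with `k × k` blocks is solvable;
moreover `(i,j) ↦ (i',j')` is a bijection from `C(m,n,2)` onto `C(mk/2,nk/2,k)`. -/
theorem stmt7 (k m n : ℕ) (hk : 2 ≤ k)
    (hm : 2 ∣ m) (hm0 : 0 < m) (hn : 2 ∣ n) (hn0 : 0 < n)
    (r c : ℕ → ℕ) (rel : ℕ × ℕ → CmpRel) (v : ℕ × ℕ → ℕ) :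
    ((∃ ξ : ℕ × ℕ → ℕ,
      (∀ p ∈ gridIcc m n, ξ p ≤ 1) ∧
      (∀ q ∈ Finset.Icc 1 n, ∑ p ∈ Finset.Icc 1 m, ξ (p, q) = r q) ∧
      (∀ p ∈ Finset.Icc 1 m, ∑ q ∈ Finset.Icc 1 n, ξ (p, q) = c p) ∧
      (∀ w ∈ cornerPts m n 2, (rel w).holds (∑ z ∈ blockF 2 w.1 w.2, ξ z) (v w)))
    ↔ (∃ ξ' : ℕ × ℕ → ℕ,
      (∀ p ∈ gridIcc (m * k / 2) (n * k / 2), ξ' p ≤ 1) ∧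
      (∀ q ∈ Finset.Icc 1 (n * k / 2),
        ∑ p ∈ Finset.Icc 1 (m * k / 2), ξ' (p, q) = pad0 k r q) ∧
      (∀ p ∈ Finset.Icc 1 (m * k / 2),
        ∑ q ∈ Finset.Icc 1 (n * k / 2), ξ' (p, q) = pad0 k c p) ∧
      (∀ w ∈ cornerPts m n 2, (rel w).holds
        (∑ z ∈ blockF k (cornerMap k w).1 (cornerMap k w).2, ξ' z) (v w))))
    ∧ (cornerPts m n 2).image (cornerMap k) = cornerPts (m * k / 2) (n * k / 2) k
    ∧ Set.InjOn (cornerMap k) ↑(cornerPts m n 2) :=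
  stmt7_general k m n hk hm hn r c rel v
end

section
/- (Padding with ones T3.) Let k ≥ 2, m, n ∈ 2ℕ, let r_1,…,r_n, c_1,…,c_m ∈ ℕ₀ with r_j ≤ m and c_i ≤ n, and for each (i,j) ∈ C(m,n,2) let ∼_{i,j} ∈ {≤, ≥, =} be a relation and v(i,j) ∈ ℕ₀. Set m' := mk/2 and n' := nk/2. Define r'_1,…,r'_{n'} by r'_{(k/2)(j−1)+1} := r_j + (m'−m) and r'_{(k/2)(j−1)+2} := r_{j+1} + (m'−m) for each odd j ∈ [n], and r'_s := m' for all remaining indices s ∈ [n'] (the added rows are filled entirely with ones); define c'_1,…,c'_{m'} analogously from c with n'−n in place of m'−m and filler value n'. Put v'(i,j) := v(i,j) + k² − 4 for every (i,j) ∈ C(m,n,2). Then there exists a binary matrix ξ on [m]×[n] with row sums r, column sums c, and Σ_{(p,q)∈B_2(i,j)} ξ_{p,q} ∼_{i,j} v(i,j) for all (i,j) ∈ C(m,n,2), if and only if there exists a binary matrix ξ' on [m']×[n'] with row sums r', column sums c', and Σ_{(p,q)∈B_k(i',j')} ξ'_{p,q} ∼_{i,j} v'(i,j) for all (i,j) ∈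 C(m,n,2), where (i',j') := ((k/2)(i−1)+1, (k/2)(j−1)+1). -/
open scoped Classical

/-- One-padded measurements (T3): the index `s = (k/2)(j−1) + 1 + l` with `j` odd and
`l ∈ [k-1]₀` gets the value `r j + pad` if `l = 0`, `r (j+1) + pad` if `l = 1`, and the filler
value `fill` otherwise. -/
def pad1 (k pad fill : ℕ) (r : ℕ → ℕ) (s : ℕ) : ℕ :=
  if (s - 1) % k = 0 then r (2 * ((s - 1) / k) + 1) + pad
  else if (s - 1) % k = 1 then r (2 * ((s - 1) / k) + 2) + pad
  else fill

/-! Write `m = 2u` and `n = 2t`. The padded grid splits into `u × t` groups of `k × k` cells; in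
each group the first two rows and columns carry the corresponding `2 × 2` block of `ξ` and every
other cell is `1`. Row and column sums then grow by exactly the prescribed padding, and every
`k × k` block sum by `2 (k - 2) + (k - 2) k = k² - 4`. Conversely, the prescribed sum of a filler
line equals its length, so it consists of ones: every solution of the padded instance has this
shape, and its restriction to the non-filler lines solves the original instance. -/

open Finset

-- The original line `i = 2a + 1 + l` (`l ∈ {0,1}`) becomes line `l` of the `a`-th group of `k`
-- padded lines; the other `k - 2` lines of each group are the filler lines `2 ≤ (s - 1) % k`.
def padIndex (k i : ℕ) : ℕ := k * ((i - 1) / 2) + 1 + (i - 1) % 2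

def unpadIndex (k s : ℕ) : ℕ := 2 * ((s - 1) / k) + 1 + (s - 1) % k

section Index

variable {k : ℕ}

lemma mul_add_div_mod_of_lt (q : ℕ) {l : ℕ} (hl : l < k) :
    (k * q + l) / k = q ∧ (k * q + l) % k = l :=
  ⟨by rw [Nat.mul_add_div (by omega), Nat.div_eq_of_lt hl, add_zero],
    by rw [Nat.mul_add_mod, Nat.mod_eq_of_lt hl]⟩

lemma padIndex_sub_one_div_mod (hk : 2 ≤ k) (i : ℕ) :
    (padIndex k i - 1) / k = (i - 1) / 2 ∧ (padIndex k i - 1) % k = (i - 1) % 2 := by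
  have hl : (i - 1) % 2 < k := by omega
  rw [padIndex, show k * ((i - 1) / 2) + 1 + (i - 1) % 2 - 1 = k * ((i - 1) / 2) + (i - 1) % 2
    by omega]
  exact mul_add_div_mod_of_lt _ hl

lemma unpadIndex_padIndex (hk : 2 ≤ k) {i : ℕ} (hi : 1 ≤ i) : unpadIndex k (padIndex k i) = i := by
  obtain ⟨hdiv, hmod⟩ := padIndex_sub_one_div_mod hk i
  rw [unpadIndex, hdiv, hmod]
  omega

lemma padIndex_unpadIndex {s : ℕ} (hs : 1 ≤ s) (hkept : (s - 1) % k < 2) :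
    padIndex k (unpadIndex k s) = s := by
  obtain ⟨hdiv, hmod⟩ := mul_add_div_mod_of_lt ((s - 1) / k) hkept
  rw [padIndex, unpadIndex, show 2 * ((s - 1) / k) + 1 + (s - 1) % k - 1
    = 2 * ((s - 1) / k) + (s - 1) % k by omega, hdiv, hmod]
  have := Nat.div_add_mod (s - 1) k
  omega

lemma padIndex_mem_Ioc (hk : 2 ≤ k) {a b i : ℕ} (hi : i ∈ Ioc (2 * a) (2 * b)) :
    padIndex k i ∈ Ioc (k * a) (k * b) := by
  rw [mem_Ioc] at hi ⊢
  have hlo : a ≤ (i - 1) / 2 := by omega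
  have hhi : (i - 1) / 2 + 1 ≤ b := by omega
  have := Nat.mul_le_mul_left k hlo
  have := Nat.mul_le_mul_left k hhi
  rw [padIndex, mul_add] at *
  omega

lemma unpadIndex_mem_Ioc {a b s : ℕ} (hs : s ∈ Ioc (k * a) (k * b)) (hkept : (s - 1) % k < 2) :
    unpadIndex k s ∈ Ioc (2 * a) (2 * b) := by
  rw [mem_Ioc] at hs ⊢
  have hk : 0 < k := Nat.pos_of_ne_zero (by rintro rfl; simp only [zero_mul] at hs; omega)
  have hlo : a ≤ (s - 1) / k := (Nat.le_div_iff_mul_le hk).2 (by rw [mul_comm]; omega)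
  have hhi : (s - 1) / k < b := (Nat.div_lt_iff_lt_mul hk).2 (by rw [mul_comm]; omega)
  rw [unpadIndex]
  omega

lemma pad1_padIndex (hk : 2 ≤ k) (pad fill : ℕ) (r : ℕ → ℕ) {i : ℕ} (hi : 1 ≤ i) :
    pad1 k pad fill r (padIndex k i) = r i + pad := by
  obtain ⟨hdiv, hmod⟩ := padIndex_sub_one_div_mod hk i
  rw [pad1, hdiv, hmod]
  rcases Nat.mod_two_eq_zero_or_one (i - 1) with h | h
  · rw [if_pos h]
    congr 2
    omega
  · rw [if_neg (by omega), if_pos h]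
    congr 2
    omega

lemma pad1_of_two_le (pad fill : ℕ) (r : ℕ → ℕ) {s : ℕ} (hs : 2 ≤ (s - 1) % k) :
    pad1 k pad fill r s = fill := by
  rw [pad1, if_neg (by omega), if_neg (by omega)]

end Index

section LineSums

variable {k : ℕ}

lemma sum_Ioc_mul_eq_sum_padIndex_add {M : Type*} [AddCommMonoid M] (hk : 2 ≤ k) (a b : ℕ)
    (g : ℕ → M) :
    ∑ s ∈ Ioc (k * a) (k * b), g s = ∑ i ∈ Ioc (2 * a) (2 * b), g (padIndex k i)
      + ∑ s ∈ Ioc (k * a) (k * b) with 2 ≤ (s - 1) % k, g s := by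
  rw [← sum_filter_add_sum_filter_not _ (fun s => 2 ≤ (s - 1) % k), add_comm]
  congr 1
  have hkept : ∀ s ∈ (Ioc (k * a) (k * b)).filter (fun s => ¬2 ≤ (s - 1) % k),
      s ∈ Ioc (k * a) (k * b) ∧ 1 ≤ s ∧ (s - 1) % k < 2 := fun s hs => by
    rw [mem_filter, mem_Ioc] at hs
    exact ⟨mem_Ioc.2 hs.1, by omega, by omega⟩
  refine sum_nbij' (unpadIndex k) (padIndex k) (fun s hs => ?_) (fun i hi => ?_)
    (fun s hs => ?_) (fun i hi => ?_) (fun s hs => ?_)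
  · exact unpadIndex_mem_Ioc (hkept s hs).1 (hkept s hs).2.2
  · refine mem_filter.2 ⟨padIndex_mem_Ioc hk hi, ?_⟩
    rw [(padIndex_sub_one_div_mod hk i).2]
    omega
  · exact padIndex_unpadIndex (hkept s hs).2.1 (hkept s hs).2.2
  · exact unpadIndex_padIndex hk (by have := (mem_Ioc.1 hi).1; omega)
  · rw [padIndex_unpadIndex (hkept s hs).2.1 (hkept s hs).2.2]

lemma card_filler_Ioc_mul (hk : 2 ≤ k) (a b : ℕ) :
    #{s ∈ Ioc (k * a) (k * b) | 2 ≤ (s - 1) % k} = (b - a) * (k - 2) := by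
  have h := sum_Ioc_mul_eq_sum_padIndex_add hk a b (fun _ => 1)
  simp only [sum_const, smul_eq_mul, mul_one, Nat.card_Ioc] at h
  rw [← Nat.mul_sub, ← Nat.mul_sub] at h
  rw [Nat.mul_sub, mul_comm (b - a) k, mul_comm (b - a) 2]
  omega

lemma sum_Ioc_mul_of_filler_eq (hk : 2 ≤ k) (a b e : ℕ) (g : ℕ → ℕ)
    (hg : ∀ s ∈ Ioc (k * a) (k * b), 2 ≤ (s - 1) % k → g s = e) :
    ∑ s ∈ Ioc (k * a) (k * b), g s
      = ∑ i ∈ Ioc (2 * a) (2 * b), g (padIndex k i) + (b - a) * (k - 2) * e := by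
  rw [sum_Ioc_mul_eq_sum_padIndex_add hk,
    sum_const_nat (s := {s ∈ Ioc (k * a) (k * b) | 2 ≤ (s - 1) % k}) (m := e)
      fun s hs => hg s (mem_filter.1 hs).1 (mem_filter.1 hs).2, card_filler_Ioc_mul hk]

end LineSums

lemma Icc_one_mul_eq_Ioc (u k : ℕ) : Icc 1 (u * k) = Ioc (k * 0) (k * u) := by
  rw [mul_zero, mul_comm]
  exact Icc_succ_left_eq_Ioc 0 _

section Grid

variable {k : ℕ}

lemma padIndex_mem_Icc (hk : 2 ≤ k) {u i : ℕ} (hi : i ∈ Icc 1 (2 * u)) :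
    padIndex k i ∈ Icc 1 (u * k) := by
  rw [mul_comm 2, Icc_one_mul_eq_Ioc] at hi
  rw [Icc_one_mul_eq_Ioc]
  exact padIndex_mem_Ioc hk hi

lemma unpadIndex_mem_Icc {u s : ℕ} (hs : s ∈ Icc 1 (u * k)) (hkept : (s - 1) % k < 2) :
    unpadIndex k s ∈ Icc 1 (2 * u) := by
  rw [Icc_one_mul_eq_Ioc] at hs
  rw [mul_comm 2, Icc_one_mul_eq_Ioc]
  exact unpadIndex_mem_Ioc hs hkept

lemma sum_Icc_mul_of_filler_eq_one (hk : 2 ≤ k) (u : ℕ) (g : ℕ → ℕ)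
    (hg : ∀ s ∈ Icc 1 (u * k), 2 ≤ (s - 1) % k → g s = 1) :
    ∑ s ∈ Icc 1 (u * k), g s = ∑ i ∈ Icc 1 (2 * u), g (padIndex k i) + u * (k - 2) := by
  rw [Icc_one_mul_eq_Ioc] at hg ⊢
  rw [sum_Ioc_mul_of_filler_eq hk 0 u 1 g hg, ← Icc_one_mul_eq_Ioc, mul_comm u 2, Nat.sub_zero,
    mul_one]

lemma line_sums_iff (hk : 2 ≤ k) {u t : ℕ} (L ℓ : ℕ → ℕ → ℕ)
    (hfill : ∀ q ∈ Icc 1 (t * k), ∀ p ∈ Icc 1 (u * k),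
      (2 ≤ (q - 1) % k ∨ 2 ≤ (p - 1) % k) → L q p = 1)
    (hpad : ∀ j ∈ Icc 1 (2 * t), ∀ i ∈ Icc 1 (2 * u), L (padIndex k j) (padIndex k i) = ℓ j i)
    (r : ℕ → ℕ) :
    (∀ q ∈ Icc 1 (t * k), ∑ p ∈ Icc 1 (u * k), L q p = pad1 k (u * k - 2 * u) (u * k) r q) ↔
      ∀ j ∈ Icc 1 (2 * t), ∑ i ∈ Icc 1 (2 * u), ℓ j i = r j := by
  have hpad_len : u * k - 2 * u = u * (k - 2) := by rw [Nat.mul_sub, mul_comm 2]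
  have hsum : ∀ j ∈ Icc 1 (2 * t),
      ∑ p ∈ Icc 1 (u * k), L (padIndex k j) p = ∑ i ∈ Icc 1 (2 * u), ℓ j i + u * (k - 2) := by
    intro j hj
    rw [sum_Icc_mul_of_filler_eq_one hk u _
      fun p hp hfp => hfill _ (padIndex_mem_Icc hk hj) p hp (Or.inr hfp)]
    exact congrArg (· + _) (sum_congr rfl (hpad j hj))
  constructor
  · intro h j hj
    have := h _ (padIndex_mem_Icc hk hj)
    rw [hsum j hj, pad1_padIndex hk _ _ _ (mem_Icc.1 hj).1, hpad_len] at this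
    omega
  · intro h q hq
    by_cases hfq : 2 ≤ (q - 1) % k
    · rw [pad1_of_two_le _ _ _ hfq, sum_congr rfl fun p hp => hfill q hq p hp (Or.inl hfq)]
      simp
    · have hj := unpadIndex_mem_Icc hq (not_le.1 hfq)
      rw [← padIndex_unpadIndex (mem_Icc.1 hq).1 (not_le.1 hfq), hsum _ hj,
        pad1_padIndex hk _ _ _ (mem_Icc.1 hj).1, h _ hj, hpad_len]

end Grid

lemma CmpRel.holds_add_right_iff (R : CmpRel) (a b c : ℕ) :
    R.holds (a + c) (b + c) ↔ R.holds a b := by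
  cases R <;> simp only [CmpRel.holds, ge_iff_le] <;> omega

lemma blockF_mul_add_one (k a b : ℕ) (hk : 1 ≤ k) :
    blockF k (k * a + 1) (k * b + 1) = Ioc (k * a) (k * (a + 1)) ×ˢ Ioc (k * b) (k * (b + 1)) := by
  ext ⟨x, y⟩
  simp only [blockF, mem_product, mem_Icc, mem_Ioc, mul_add, mul_one]
  omega

lemma Ioc_mul_subset_Icc (k : ℕ) {a u : ℕ} (h : a < u) :
    Ioc (k * a) (k * (a + 1)) ⊆ Icc 1 (u * k) := by
  rw [Icc_one_mul_eq_Ioc]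
  exact Ioc_subset_Ioc (Nat.zero_le _) (Nat.mul_le_mul_left k h)

lemma exists_eq_of_mem_cornerPts {m n : ℕ} {w : ℕ × ℕ} (hw : w ∈ cornerPts (2 * m) (2 * n) 2) :
    ∃ a < m, ∃ b < n, w = (2 * a + 1, 2 * b + 1) := by
  obtain ⟨i, j⟩ := w
  simp only [cornerPts, gridIcc, mem_filter, mem_product, mem_Icc] at hw
  exact ⟨i / 2, by omega, j / 2, by omega, by simp only [Prod.mk.injEq]; omega⟩

lemma cornerMap_two_mul_add_one (k a b : ℕ) :
    cornerMap k (2 * a + 1, 2 * b + 1) = (k * a + 1, k * b + 1) := by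
  simp only [cornerMap, Nat.add_sub_cancel, Nat.mul_left_comm k 2,
    Nat.mul_div_cancel_left _ two_pos]

structure IsOnePadding (k u t : ℕ) (ξ ξ' : ℕ × ℕ → ℕ) : Prop where
  filler_eq_one : ∀ p ∈ Icc 1 (u * k), ∀ q ∈ Icc 1 (t * k),
    (2 ≤ (p - 1) % k ∨ 2 ≤ (q - 1) % k) → ξ' (p, q) = 1
  padIndex_eq : ∀ i ∈ Icc 1 (2 * u), ∀ j ∈ Icc 1 (2 * t),
    ξ' (padIndex k i, padIndex k j) = ξ (i, j)

namespace IsOnePadding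

variable {k u t : ℕ} {ξ ξ' : ℕ × ℕ → ℕ}

lemma le_one_iff (hk : 2 ≤ k) (h : IsOnePadding k u t ξ ξ') :
    (∀ p ∈ gridIcc (2 * u) (2 * t), ξ p ≤ 1) ↔ ∀ p ∈ gridIcc (u * k) (t * k), ξ' p ≤ 1 := by
  simp only [gridIcc, mem_product, Prod.forall]
  constructor
  · intro hle p q ⟨hp, hq⟩
    by_cases hfill : 2 ≤ (p - 1) % k ∨ 2 ≤ (q - 1) % k
    · exact (h.filler_eq_one p hp q hq hfill).le
    · push Not at hfill
      have hi := unpadIndex_mem_Icc hp hfill.1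
      have hj := unpadIndex_mem_Icc hq hfill.2
      rw [← padIndex_unpadIndex (mem_Icc.1 hp).1 hfill.1,
        ← padIndex_unpadIndex (mem_Icc.1 hq).1 hfill.2, h.padIndex_eq _ hi _ hj]
      exact hle _ _ ⟨hi, hj⟩
  · intro hle i j ⟨hi, hj⟩
    rw [← h.padIndex_eq i hi j hj]
    exact hle _ _ ⟨padIndex_mem_Icc hk hi, padIndex_mem_Icc hk hj⟩

lemma row_sums_iff (hk : 2 ≤ k) (h : IsOnePadding k u t ξ ξ') (r : ℕ → ℕ) :
    (∀ q ∈ Icc 1 (t * k), ∑ p ∈ Icc 1 (u * k), ξ' (p, q) = pad1 k (u * k - 2 * u) (u * k) r q) ↔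
      ∀ q ∈ Icc 1 (2 * t), ∑ p ∈ Icc 1 (2 * u), ξ (p, q) = r q :=
  line_sums_iff hk (fun q p => ξ' (p, q)) (fun q p => ξ (p, q))
    (fun q hq p hp hfill => h.filler_eq_one p hp q hq hfill.symm)
    (fun j hj i hi => h.padIndex_eq i hi j hj) r

lemma col_sums_iff (hk : 2 ≤ k) (h : IsOnePadding k u t ξ ξ') (c : ℕ → ℕ) :
    (∀ p ∈ Icc 1 (u * k), ∑ q ∈ Icc 1 (t * k), ξ' (p, q) = pad1 k (t * k - 2 * t) (t * k) c p) ↔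
      ∀ p ∈ Icc 1 (2 * u), ∑ q ∈ Icc 1 (2 * t), ξ (p, q) = c p :=
  line_sums_iff hk (fun p q => ξ' (p, q)) (fun p q => ξ (p, q)) h.filler_eq_one h.padIndex_eq c

lemma sum_blockF (hk : 2 ≤ k) (h : IsOnePadding k u t ξ ξ') {w : ℕ × ℕ}
    (hw : w ∈ cornerPts (2 * u) (2 * t) 2) :
    ∑ z ∈ blockF k (cornerMap k w).1 (cornerMap k w).2, ξ' z
      = ∑ z ∈ blockF 2 w.1 w.2, ξ z + (k ^ 2 - 4) := by
  obtain ⟨a, ha, b, hb, rfl⟩ := exists_eq_of_mem_cornerPts hw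
  have hrows := Ioc_mul_subset_Icc k ha
  have hcols := Ioc_mul_subset_Icc k hb
  have hrow_sum : ∀ i ∈ Ioc (2 * a) (2 * (a + 1)),
      ∑ y ∈ Ioc (k * b) (k * (b + 1)), ξ' (padIndex k i, y)
        = ∑ j ∈ Ioc (2 * b) (2 * (b + 1)), ξ (i, j) + (k - 2) := by
    intro i hi
    have hi' : i ∈ Icc 1 (2 * u) := mul_comm u 2 ▸ Ioc_mul_subset_Icc 2 ha hi
    rw [sum_Ioc_mul_of_filler_eq hk b (b + 1) 1 _
      fun y hy hfy => h.filler_eq_one _ (padIndex_mem_Icc hk hi') y (hcols hy) (Or.inr hfy)]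
    rw [sum_congr rfl fun j hj => h.padIndex_eq i hi' j
      (mul_comm t 2 ▸ Ioc_mul_subset_Icc 2 hb hj)]
    simp
  have hfiller_row : ∀ x ∈ Ioc (k * a) (k * (a + 1)), 2 ≤ (x - 1) % k →
      ∑ y ∈ Ioc (k * b) (k * (b + 1)), ξ' (x, y) = k := by
    intro x hx hfx
    rw [sum_congr rfl fun y hy => h.filler_eq_one x (hrows hx) y (hcols hy) (Or.inl hfx)]
    simp [Nat.card_Ioc, ← Nat.mul_sub]
  rw [cornerMap_two_mul_add_one, blockF_mul_add_one k a b (by omega),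
    blockF_mul_add_one 2 a b (by omega), sum_product, sum_product,
    sum_Ioc_mul_of_filler_eq hk a (a + 1) k _ hfiller_row, sum_congr rfl hrow_sum,
    sum_add_distrib, sum_const, Nat.card_Ioc]
  have hsq : (2 * (a + 1) - 2 * a) • (k - 2) + (a + 1 - a) * (k - 2) * k = k ^ 2 - 4 := by
    obtain ⟨d, rfl⟩ : ∃ d, k = d + 2 := ⟨k - 2, by omega⟩
    simp only [smul_eq_mul, Nat.add_sub_cancel, Nat.add_sub_cancel_left, mul_add, mul_one]
    ring_nf
    omega
  rw [add_assoc, hsq]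

lemma blocks_iff (hk : 2 ≤ k) (h : IsOnePadding k u t ξ ξ') (rel : ℕ × ℕ → CmpRel)
    (v : ℕ × ℕ → ℕ) :
    (∀ w ∈ cornerPts (2 * u) (2 * t) 2, (rel w).holds (∑ z ∈ blockF 2 w.1 w.2, ξ z) (v w)) ↔
      ∀ w ∈ cornerPts (2 * u) (2 * t) 2, (rel w).holds
        (∑ z ∈ blockF k (cornerMap k w).1 (cornerMap k w).2, ξ' z) (v w + (k ^ 2 - 4)) :=
  forall₂_congr fun w hw => by rw [h.sum_blockF hk hw, CmpRel.holds_add_right_iff]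

end IsOnePadding

def padMatrix (k : ℕ) (ξ : ℕ × ℕ → ℕ) (z : ℕ × ℕ) : ℕ :=
  if (z.1 - 1) % k < 2 ∧ (z.2 - 1) % k < 2 then ξ (unpadIndex k z.1, unpadIndex k z.2) else 1

lemma isOnePadding_padMatrix {k : ℕ} (hk : 2 ≤ k) (u t : ℕ) (ξ : ℕ × ℕ → ℕ) :
    IsOnePadding k u t ξ (padMatrix k ξ) where
  filler_eq_one p _ q _ hfill := by
    rw [padMatrix, if_neg (show ¬((p - 1) % k < 2 ∧ (q - 1) % k < 2) by omega)]
  padIndex_eq i hi j hj := by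
    rw [padMatrix, if_pos (by simp only [(padIndex_sub_one_div_mod hk _).2]; omega),
      unpadIndex_padIndex hk (mem_Icc.1 hi).1, unpadIndex_padIndex hk (mem_Icc.1 hj).1]

-- Entries are at most `1`, so a line whose prescribed sum is its full length is all ones.
lemma isOnePadding_of_line_sums {k u t padR padC : ℕ} {r c : ℕ → ℕ} {ξ' : ℕ × ℕ → ℕ}
    (hle : ∀ p ∈ gridIcc (u * k) (t * k), ξ' p ≤ 1)
    (hrow : ∀ q ∈ Icc 1 (t * k), ∑ p ∈ Icc 1 (u * k), ξ' (p, q) = pad1 k padR (u * k) r q)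
    (hcol : ∀ p ∈ Icc 1 (u * k), ∑ q ∈ Icc 1 (t * k), ξ' (p, q) = pad1 k padC (t * k) c p) :
    IsOnePadding k u t (fun z => ξ' (padIndex k z.1, padIndex k z.2)) ξ' where
  filler_eq_one p hp q hq := by
    have hle' : ∀ p ∈ Icc 1 (u * k), ∀ q ∈ Icc 1 (t * k), ξ' (p, q) ≤ 1 :=
      fun p hp q hq => hle _ (mem_product.2 ⟨hp, hq⟩)
    rintro (hfp | hfq)
    · refine (sum_eq_sum_iff_of_le (hle' p hp)).1 ?_ q hq
      simp [hcol p hp, pad1_of_two_le _ _ _ hfp]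
    · refine (sum_eq_sum_iff_of_le fun p hp => hle' p hp q hq).1 ?_ p hp
      simp [hrow q hq, pad1_of_two_le _ _ _ hfq]
  padIndex_eq _ _ _ _ := rfl

theorem stmt8_general (k m n : ℕ) (hk : 2 ≤ k)
    (hm : 2 ∣ m) (hn : 2 ∣ n)
    (r c : ℕ → ℕ)
    (rel : ℕ × ℕ → CmpRel) (v : ℕ × ℕ → ℕ) :
    (∃ ξ : ℕ × ℕ → ℕ,
      (∀ p ∈ gridIcc m n, ξ p ≤ 1) ∧
      (∀ q ∈ Finset.Icc 1 n, ∑ p ∈ Finset.Icc 1 m, ξ (p, q) = r q) ∧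
      (∀ p ∈ Finset.Icc 1 m, ∑ q ∈ Finset.Icc 1 n, ξ (p, q) = c p) ∧
      (∀ w ∈ cornerPts m n 2, (rel w).holds (∑ z ∈ blockF 2 w.1 w.2, ξ z) (v w)))
    ↔ (∃ ξ' : ℕ × ℕ → ℕ,
      (∀ p ∈ gridIcc (m * k / 2) (n * k / 2), ξ' p ≤ 1) ∧
      (∀ q ∈ Finset.Icc 1 (n * k / 2),
        ∑ p ∈ Finset.Icc 1 (m * k / 2), ξ' (p, q) = pad1 k (m * k / 2 - m) (m * k / 2) r q) ∧
      (∀ p ∈ Finset.Icc 1 (m * k / 2),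
        ∑ q ∈ Finset.Icc 1 (n * k / 2), ξ' (p, q) = pad1 k (n * k / 2 - n) (n * k / 2) c p) ∧
      (∀ w ∈ cornerPts m n 2, (rel w).holds
        (∑ z ∈ blockF k (cornerMap k w).1 (cornerMap k w).2, ξ' z) (v w + (k ^ 2 - 4)))) := by
  obtain ⟨u, rfl⟩ := hm
  obtain ⟨t, rfl⟩ := hn
  simp only [mul_assoc, Nat.mul_div_cancel_left _ two_pos]
  constructor
  · rintro ⟨ξ, hle, hrow, hcol, hblk⟩
    have h := isOnePadding_padMatrix hk u t ξ
    exact ⟨padMatrix k ξ, (h.le_one_iff hk).1 hle, (h.row_sums_iff hk r).2 hrow,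
      (h.col_sums_iff hk c).2 hcol, (h.blocks_iff hk rel v).1 hblk⟩
  · rintro ⟨ξ', hle, hrow, hcol, hblk⟩
    have h := isOnePadding_of_line_sums hle hrow hcol
    exact ⟨_, (h.le_one_iff hk).2 hle, (h.row_sums_iff hk r).1 hrow,
      (h.col_sums_iff hk c).1 hcol, (h.blocks_iff hk rel v).2 hblk⟩

/-- padding with ones T3: the original instance on `[m] × [n]` with `2 × 2` blocks
is solvable iff the one-padded instance on `[m'] × [n']` (`m' = mk/2`, `n' = nk/2`) with `k × k`
blocks and window values `v'(i,j) = v(i,j) + k² − 4` is solvable. -/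
theorem stmt8 (k m n : ℕ) (hk : 2 ≤ k)
    (hm : 2 ∣ m) (hm0 : 0 < m) (hn : 2 ∣ n) (hn0 : 0 < n)
    (r c : ℕ → ℕ)
    (hr : ∀ j ∈ Finset.Icc 1 n, r j ≤ m) (hc : ∀ i ∈ Finset.Icc 1 m, c i ≤ n)
    (rel : ℕ × ℕ → CmpRel) (v : ℕ × ℕ → ℕ) :
    (∃ ξ : ℕ × ℕ → ℕ,
      (∀ p ∈ gridIcc m n, ξ p ≤ 1) ∧
      (∀ q ∈ Finset.Icc 1 n, ∑ p ∈ Finset.Icc 1 m, ξ (p, q) = r q) ∧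
      (∀ p ∈ Finset.Icc 1 m, ∑ q ∈ Finset.Icc 1 n, ξ (p, q) = c p) ∧
      (∀ w ∈ cornerPts m n 2, (rel w).holds (∑ z ∈ blockF 2 w.1 w.2, ξ z) (v w)))
    ↔ (∃ ξ' : ℕ × ℕ → ℕ,
      (∀ p ∈ gridIcc (m * k / 2) (n * k / 2), ξ' p ≤ 1) ∧
      (∀ q ∈ Finset.Icc 1 (n * k / 2),
        ∑ p ∈ Finset.Icc 1 (m * k / 2), ξ' (p, q) = pad1 k (m * k / 2 - m) (m * k / 2) r q) ∧
      (∀ p ∈ Finset.Icc 1 (m * k / 2),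
        ∑ q ∈ Finset.Icc 1 (n * k / 2), ξ' (p, q) = pad1 k (n * k / 2 - n) (n * k / 2) c p) ∧
      (∀ w ∈ cornerPts m n 2, (rel w).holds
        (∑ z ∈ blockF k (cornerMap k w).1 (cornerMap k w).2, ξ' z) (v w + (k ^ 2 - 4)))) :=
  stmt8_general k m n hk hm hn r c rel v
end

section
/- Let A = (a_1,…,a_{m1})^T ∈ {0,1}^{m1×n1} be the node-edge incidence matrix of a finite simple bipartite graph with vertex bipartition (R1, R2) of [m1], and let H = (h_1,…,h_{m2})^T ∈ {0,1}^{m2×n1} satisfy: (i) for every l ∈ [m2] there exists i ∈ [m1] with supp(h_l) ⊆ supp(a_i); (ii) for any two distinct rows h_i, h_l with supp(h_i) ∪ supp(h_l) ⊆ supp(a_k) for some k ∈ [m1], one has supp(h_i) ∩ supp(h_l) = ∅; and |supp(h_l)| ≥ 2 for all l ∈ [m2]. For L ⊆ [m2] and R ⊆ [m1] set L(R) := {l ∈ L : ∃ i ∈ R with supp(h_l) ⊆ supp(a_i)}. Then for all I ⊆ [m1] and L ⊆ [m2], the vector Σ_{i ∈ R1∩I} a_i + Σ_{l ∈ L(R1\I)}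 h_l has all entries in {0,1}, and likewise for R2 in place of R1. -/
/-!
Fix a column `j` and let `i0` be the unique row of `R` with `a_{i0} j = 1`. The `A`-part of the
sum at `j` is `1` if `i0 ∈ I` and `0` otherwise. A row `h_l` with `l ∈ L(R \ I)` can be nonzero at
`j` only if `supp h_l ⊆ supp a_{i0}` with `i0 ∉ I`; two such rows share `j`, so by (ii) they
coincide, and the `H`-part is `0` or `1`, and `0` whenever `i0 ∈ I`.
-/

open scoped Classical

/-- `L(R) = {l ∈ L : ∃ i ∈ R with supp(h_l) ⊆ supp(a_i)}`. -/
noncomputable def LofR {m1 m2 n1 : ℕ} (A : Matrix (Fin m1) (Fin n1) ℤ)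
    (H : Matrix (Fin m2) (Fin n1) ℤ)
    (L : Finset (Fin m2)) (R : Finset (Fin m1)) : Finset (Fin m2) :=
  L.filter fun l => ∃ i ∈ R, {j | H l j ≠ 0} ⊆ {j | A i j ≠ 0}

section Column

variable {m1 m2 n1 : ℕ} {A : Matrix (Fin m1) (Fin n1) ℤ} {H : Matrix (Fin m2) (Fin n1) ℤ}
  {R I : Finset (Fin m1)} {L : Finset (Fin m2)} {j : Fin n1} {i0 : Fin m1}

lemma sum_inter_apply_eq_ite (hi0R : i0 ∈ R) (hi0 : A i0 j = 1)
    (huniq : ∀ i ∈ R, A i j ≠ 0 → i = i0) :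
    ∑ i ∈ R ∩ I, A i j = if i0 ∈ I then 1 else 0 := by
  by_cases hi0I : i0 ∈ I
  · rw [if_pos hi0I, Finset.sum_eq_single_of_mem i0 (Finset.mem_inter.mpr ⟨hi0R, hi0I⟩), hi0]
    intro i hi hne
    by_contra hAij
    exact hne (huniq i (Finset.mem_inter.mp hi).1 hAij)
  · rw [if_neg hi0I]
    refine Finset.sum_eq_zero fun i hi => ?_
    by_contra hAij
    obtain ⟨hiR, hiI⟩ := Finset.mem_inter.mp hi
    exact hi0I (huniq i hiR hAij ▸ hiI)

lemma mem_sdiff_and_supp_subset_of_mem_LofR (huniq : ∀ i ∈ R, A i j ≠ 0 → i = i0)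
    {l : Fin m2} (hl : l ∈ LofR A H L (R \ I)) (hlj : H l j ≠ 0) :
    i0 ∈ R \ I ∧ {j' | H l j' ≠ 0} ⊆ {j' | A i0 j' ≠ 0} := by
  obtain ⟨-, i, hiRI, hsub⟩ := Finset.mem_filter.mp hl
  obtain rfl : i = i0 := huniq i (Finset.mem_sdiff.mp hiRI).1 (hsub hlj)
  exact ⟨hiRI, hsub⟩

lemma sum_LofR_sdiff_apply_eq_zero (huniq : ∀ i ∈ R, A i j ≠ 0 → i = i0) (hi0I : i0 ∈ I) :
    ∑ l ∈ LofR A H L (R \ I), H l j = 0 :=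
  Finset.sum_eq_zero fun l hl => by
    by_contra hlj
    exact (Finset.mem_sdiff.mp (mem_sdiff_and_supp_subset_of_mem_LofR huniq hl hlj).1).2 hi0I

lemma sum_LofR_sdiff_apply_mem (hH01 : ∀ l j, H l j = 0 ∨ H l j = 1)
    (hii : ∀ l l', l ≠ l' →
        (∃ i, {j | H l j ≠ 0} ∪ {j | H l' j ≠ 0} ⊆ {j | A i j ≠ 0}) →
        {j | H l j ≠ 0} ∩ {j | H l' j ≠ 0} = ∅)
    (huniq : ∀ i ∈ R, A i j ≠ 0 → i = i0) :
    ∑ l ∈ LofR A H L (R \ I), H l j ∈ ({0, 1} : Set ℤ) := by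
  by_cases hex : ∃ l ∈ LofR A H L (R \ I), H l j ≠ 0
  · obtain ⟨l0, hl0, hl0j⟩ := hex
    have hsub0 := (mem_sdiff_and_supp_subset_of_mem_LofR huniq hl0 hl0j).2
    right
    rw [Finset.sum_eq_single_of_mem l0 hl0]
    · exact (hH01 l0 j).resolve_left hl0j
    · intro l hl hne
      by_contra hlj
      have hsub := (mem_sdiff_and_supp_subset_of_mem_LofR huniq hl hlj).2
      have hdisj := hii l l0 hne ⟨i0, Set.union_subset hsub hsub0⟩
      exact (Set.eq_empty_iff_forall_notMem.mp hdisj) j ⟨hlj, hl0j⟩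
  · push Not at hex
    exact Or.inl (Finset.sum_eq_zero hex)

lemma sum_inter_apply_add_sum_LofR_sdiff_apply_mem (hA01 : ∀ i e, A i e = 0 ∨ A i e = 1)
    (hH01 : ∀ l j, H l j = 0 ∨ H l j = 1) (hbip : ∃! i, i ∈ R ∧ A i j = 1)
    (hii : ∀ l l', l ≠ l' →
        (∃ i, {j | H l j ≠ 0} ∪ {j | H l' j ≠ 0} ⊆ {j | A i j ≠ 0}) →
        {j | H l j ≠ 0} ∩ {j | H l' j ≠ 0} = ∅) :
    (∑ i ∈ R ∩ I, A i j) + ∑ l ∈ LofR A H L (R \ I), H l j ∈ ({0, 1} : Set ℤ) := by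
  obtain ⟨i0, ⟨hi0R, hi0⟩, huniq1⟩ := hbip
  have huniq : ∀ i ∈ R, A i j ≠ 0 → i = i0 := fun i hi hAij =>
    huniq1 i ⟨hi, (hA01 i j).resolve_left hAij⟩
  rw [sum_inter_apply_eq_ite hi0R hi0 huniq]
  by_cases hi0I : i0 ∈ I
  · simp [hi0I, sum_LofR_sdiff_apply_eq_zero huniq hi0I]
  · simpa [hi0I] using sum_LofR_sdiff_apply_mem hH01 hii huniq

end Column

theorem stmt11_general (m1 m2 n1 : ℕ)
    (A : Matrix (Fin m1) (Fin n1) ℤ) (H : Matrix (Fin m2) (Fin n1) ℤ)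
    (R1 R2 : Finset (Fin m1))
    (hA01 : ∀ i e, A i e = 0 ∨ A i e = 1)
    (hH01 : ∀ l j, H l j = 0 ∨ H l j = 1)
    (hbip1 : ∀ e, ∃! i, i ∈ R1 ∧ A i e = 1)
    (hbip2 : ∀ e, ∃! i, i ∈ R2 ∧ A i e = 1)
    (hii : ∀ l l', l ≠ l' →
        (∃ i, {j | H l j ≠ 0} ∪ {j | H l' j ≠ 0} ⊆ {j | A i j ≠ 0}) →
        {j | H l j ≠ 0} ∩ {j | H l' j ≠ 0} = ∅)
    (I : Finset (Fin m1)) (L : Finset (Fin m2)) :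
    ∀ j : Fin n1,
      ((∑ i ∈ R1 ∩ I, A i j) + ∑ l ∈ LofR A H L (R1 \ I), H l j) ∈ ({0, 1} : Set ℤ) ∧
      ((∑ i ∈ R2 ∩ I, A i j) + ∑ l ∈ LofR A H L (R2 \ I), H l j) ∈ ({0, 1} : Set ℤ) :=
  fun j => ⟨sum_inter_apply_add_sum_LofR_sdiff_apply_mem hA01 hH01 (hbip1 j) hii,
    sum_inter_apply_add_sum_LofR_sdiff_apply_mem hA01 hH01 (hbip2 j) hii⟩

/-- with `A` the node-edge incidence matrix of a finite simple bipartite graph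
with bipartition `(R1, R2)` and `H` satisfying (i), (ii) and `|supp(h_l)| ≥ 2`, for all
`I ⊆ [m1]` and `L ⊆ [m2]` the vector `Σ_{i ∈ R1∩I} a_i + Σ_{l ∈ L(R1\I)} h_l` has all entries
in `{0,1}`, and likewise with `R2` in place of `R1`. -/
theorem stmt11 (m1 m2 n1 : ℕ)
    (A : Matrix (Fin m1) (Fin n1) ℤ) (H : Matrix (Fin m2) (Fin n1) ℤ)
    (R1 R2 : Finset (Fin m1))
    (hdisj : Disjoint R1 R2) (hcover : R1 ∪ R2 = Finset.univ)
    (hA01 : ∀ i e, A i e = 0 ∨ A i e = 1)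
    (hH01 : ∀ l j, H l j = 0 ∨ H l j = 1)
    (hbip1 : ∀ e, ∃! i, i ∈ R1 ∧ A i e = 1)
    (hbip2 : ∀ e, ∃! i, i ∈ R2 ∧ A i e = 1)
    (hsimple : ∀ e e' : Fin n1, (∀ i, A i e = A i e') → e = e')
    (hi : ∀ l, ∃ i, {j | H l j ≠ 0} ⊆ {j | A i j ≠ 0})
    (hii : ∀ l l', l ≠ l' →
        (∃ i, {j | H l j ≠ 0} ∪ {j | H l' j ≠ 0} ⊆ {j | A i j ≠ 0}) →
        {j | H l j ≠ 0} ∩ {j | H l' j ≠ 0} = ∅)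
    (hsupp2 : ∀ l, 2 ≤ {j | H l j ≠ 0}.ncard)
    (I : Finset (Fin m1)) (L : Finset (Fin m2)) :
    ∀ j : Fin n1,
      ((∑ i ∈ R1 ∩ I, A i j) + ∑ l ∈ LofR A H L (R1 \ I), H l j) ∈ ({0, 1} : Set ℤ) ∧
      ((∑ i ∈ R2 ∩ I, A i j) + ∑ l ∈ LofR A H L (R2 \ I), H l j) ∈ ({0, 1} : Set ℤ) :=
  stmt11_general m1 m2 n1 A H R1 R2 hA01 hH01 hbip1 hbip2 hii I L
end

section
/- Let A = (a_1,…,a_{m1})^T ∈ {0,1}^{m1×n1} be the node-edge incidence matrix of a finite simple bipartite graph with vertex bipartition (R1, R2) of [m1], and let H = (h_1,…,h_{m2})^T ∈ {0,1}^{m2×n1} satisfy: (i) for every l ∈ [m2] there exists i ∈ [m1] with supp(h_l) ⊆ supp(a_i); (ii) for any two distinct rows h_i, h_l with supp(h_i) ∪ supp(h_l) ⊆ supp(a_k) for some k ∈ [m1], one has supp(h_i) ∩ supp(h_l) = ∅; and |supp(h_l)| ≥ 2 for all l ∈ [m2]. For L ⊆ [m2] and R ⊆ [m1] set L(R) :=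 {l ∈ L : ∃ i ∈ R with supp(h_l) ⊆ supp(a_i)}. Then for all I ⊆ [m1] and L ⊆ [m2], the vector (Σ_{i ∈ R1∩I} a_i + Σ_{l ∈ L(R1\I)} h_l − Σ_{l ∈ L(R1∩I)} h_l) − (Σ_{i ∈ R2∩I} a_i + Σ_{l ∈ L(R2\I)} h_l − Σ_{l ∈ L(R2∩I)} h_l) ∈ ℤ^{n1} has all entries in {0, 1, −1}; in other words, the rows of the stacked matrix (A; H) indexed by I and L can be split into two parts such that the sum of the rows in one part minus the sum of the rows in the other part is a vector with entries in {0, ±1}. -/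
open scoped Classical

/-! Fix a column `j` (an edge). It has exactly one endpoint `i₀` on each side `R` of the
bipartition, so `j ∈ supp h_l ⊆ supp a_i` with `i ∈ R` forces `i = i₀`, and by (ii) at most one
`l ∈ L` has `j ∈ supp h_l ⊆ supp a_{i₀}`. Writing `c ∈ {0, 1}` for the number of such `l`, the `R`-part of the `j`-th entry is
`[i₀ ∈ I] + [i₀ ∉ I] c - [i₀ ∈ I] c`, i.e. `[i₀ ∈ I] xor c ∈ {0, 1}`, and the difference of the
two parts lies in `{0, 1, -1}`. -/

theorem Finset.sum_inter_eq_ite_of_unique {ι : Type*} [DecidableEq ι] {f : ι → ℤ}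
    (hf : ∀ i, f i = 0 ∨ f i = 1) {R : Finset ι} {i₀ : ι} (hi₀ : i₀ ∈ R ∧ f i₀ = 1)
    (huniq : ∀ i, i ∈ R ∧ f i = 1 → i = i₀) (I : Finset ι) :
    ∑ i ∈ R ∩ I, f i = if i₀ ∈ I then 1 else 0 := by
  calc ∑ i ∈ R ∩ I, f i = ∑ i ∈ R ∩ I, if i = i₀ then 1 else 0 := by
        refine Finset.sum_congr rfl fun i hi => ?_
        split_ifs with h
        · exact h ▸ hi₀.2
        · exact (hf i).resolve_right fun h1 => h (huniq i ⟨(Finset.mem_inter.1 hi).1, h1⟩)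
    _ = if i₀ ∈ I then 1 else 0 := by simp [hi₀.1]

theorem Finset.sum_eq_zero_or_one_of_subsingleton_support {ι : Type*} {s : Finset ι}
    {f : ι → ℤ} (hf : ∀ i ∈ s, f i = 0 ∨ f i = 1)
    (hsub : ∀ i ∈ s, ∀ i' ∈ s, f i ≠ 0 → f i' ≠ 0 → i = i') :
    ∑ i ∈ s, f i = 0 ∨ ∑ i ∈ s, f i = 1 := by
  by_cases h : ∃ i ∈ s, f i ≠ 0
  · obtain ⟨i, hi, hfi⟩ := h
    right
    rw [Finset.sum_eq_single_of_mem i hi fun i' hi' hne => by_contra fun h' =>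
      hne (hsub i hi i' hi' hfi h').symm]
    exact (hf i hi).resolve_left hfi
  · push Not at h
    exact Or.inl (Finset.sum_eq_zero h)

section Column

variable {m1 m2 n1 : ℕ} {A : Matrix (Fin m1) (Fin n1) ℤ} {H : Matrix (Fin m2) (Fin n1) ℤ}

theorem sum_LofR_eq_ite (L : Finset (Fin m2)) {R : Finset (Fin m1)} {j : Fin n1} {i₀ : Fin m1}
    (hR : ∀ i ∈ R, A i j ≠ 0 → i = i₀) :
    ∑ l ∈ LofR A H L R, H l j = if i₀ ∈ R then ∑ l ∈ LofR A H L {i₀}, H l j else 0 := by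
  have key : ∀ l, H l j ≠ 0 →
      ((∃ i ∈ R, {x | H l x ≠ 0} ⊆ {x | A i x ≠ 0}) ↔
        i₀ ∈ R ∧ ∃ i ∈ ({i₀} : Finset (Fin m1)), {x | H l x ≠ 0} ⊆ {x | A i x ≠ 0}) := by
    intro l hlj
    constructor
    · rintro ⟨i, hiR, hsub⟩
      obtain rfl := hR i hiR (hsub hlj)
      exact ⟨hiR, i, Finset.mem_singleton_self i, hsub⟩
    · rintro ⟨hi₀R, i, hi, hsub⟩
      exact ⟨i, Finset.mem_singleton.1 hi ▸ hi₀R, hsub⟩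
  split_ifs with hi₀R
  · simp only [LofR, Finset.sum_filter]
    refine Finset.sum_congr rfl fun l _ => ?_
    by_cases hlj : H l j = 0
    · simp [hlj]
    · simp only [key l hlj, hi₀R, true_and]
  · simp only [LofR, Finset.sum_filter]
    refine Finset.sum_eq_zero fun l _ => ?_
    by_cases hlj : H l j = 0
    · simp [hlj]
    · exact if_neg fun h => hi₀R ((key l hlj).1 h).1

theorem sum_LofR_singleton_eq_zero_or_one {j : Fin n1} (hH01 : ∀ l, H l j = 0 ∨ H l j = 1)
    (hii : ∀ l l', l ≠ l' →
        (∃ i, {j | H l j ≠ 0} ∪ {j | H l' j ≠ 0} ⊆ {j | A i j ≠ 0}) →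
        {j | H l j ≠ 0} ∩ {j | H l' j ≠ 0} = ∅)
    (L : Finset (Fin m2)) (i₀ : Fin m1) :
    ∑ l ∈ LofR A H L {i₀}, H l j = 0 ∨ ∑ l ∈ LofR A H L {i₀}, H l j = 1 := by
  refine Finset.sum_eq_zero_or_one_of_subsingleton_support (fun l _ => hH01 l) ?_
  intro l hl l' hl' hlj hl'j
  simp only [LofR, Finset.mem_filter, Finset.mem_singleton, exists_eq_left] at hl hl'
  by_contra hne
  have hdisj := hii l l' hne ⟨i₀, Set.union_subset hl.2 hl'.2⟩
  exact (Set.eq_empty_iff_forall_notMem.1 hdisj j) ⟨hlj, hl'j⟩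

theorem side_sum_mem_zero_one {j : Fin n1} (hA01 : ∀ i, A i j = 0 ∨ A i j = 1)
    (hH01 : ∀ l, H l j = 0 ∨ H l j = 1)
    (hii : ∀ l l', l ≠ l' →
        (∃ i, {j | H l j ≠ 0} ∪ {j | H l' j ≠ 0} ⊆ {j | A i j ≠ 0}) →
        {j | H l j ≠ 0} ∩ {j | H l' j ≠ 0} = ∅)
    {R : Finset (Fin m1)} (hR : ∃! i, i ∈ R ∧ A i j = 1)
    (I : Finset (Fin m1)) (L : Finset (Fin m2)) :
    (∑ i ∈ R ∩ I, A i j) + (∑ l ∈ LofR A H L (R \ I), H l j)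
      - ∑ l ∈ LofR A H L (R ∩ I), H l j ∈ ({0, 1} : Set ℤ) := by
  obtain ⟨i₀, hi₀, huniq⟩ := hR
  have hendpoint : ∀ R' ⊆ R, ∀ i ∈ R', A i j ≠ 0 → i = i₀ := fun R' hR' i hi hA =>
    huniq i ⟨hR' hi, (hA01 i).resolve_left hA⟩
  have hA : ∑ i ∈ R ∩ I, A i j = if i₀ ∈ I then 1 else 0 :=
    Finset.sum_inter_eq_ite_of_unique hA01 hi₀ huniq I
  rw [hA, sum_LofR_eq_ite L (hendpoint _ Finset.sdiff_subset),
    sum_LofR_eq_ite L (hendpoint _ Finset.inter_subset_left)]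
  have hc := sum_LofR_singleton_eq_zero_or_one hH01 hii L i₀
  by_cases hI : i₀ ∈ I <;> simp [hI, hi₀.1] <;> omega

end Column

theorem stmt12_general (m1 m2 n1 : ℕ)
    (A : Matrix (Fin m1) (Fin n1) ℤ) (H : Matrix (Fin m2) (Fin n1) ℤ)
    (R1 R2 : Finset (Fin m1))
    (hA01 : ∀ i e, A i e = 0 ∨ A i e = 1)
    (hH01 : ∀ l j, H l j = 0 ∨ H l j = 1)
    (hbip1 : ∀ e, ∃! i, i ∈ R1 ∧ A i e = 1)
    (hbip2 : ∀ e, ∃! i, i ∈ R2 ∧ A i e = 1)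
    (hii : ∀ l l', l ≠ l' →
        (∃ i, {j | H l j ≠ 0} ∪ {j | H l' j ≠ 0} ⊆ {j | A i j ≠ 0}) →
        {j | H l j ≠ 0} ∩ {j | H l' j ≠ 0} = ∅)
    (I : Finset (Fin m1)) (L : Finset (Fin m2)) :
    ∀ j : Fin n1,
      (((∑ i ∈ R1 ∩ I, A i j) + (∑ l ∈ LofR A H L (R1 \ I), H l j)
          - ∑ l ∈ LofR A H L (R1 ∩ I), H l j)
        - ((∑ i ∈ R2 ∩ I, A i j) + (∑ l ∈ LofR A H L (R2 \ I), H l j)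
          - ∑ l ∈ LofR A H L (R2 ∩ I), H l j)) ∈ ({0, 1, -1} : Set ℤ) := by
  intro j
  have h1 := side_sum_mem_zero_one (hA01 · j) (hH01 · j) hii (hbip1 j) I L
  have h2 := side_sum_mem_zero_one (hA01 · j) (hH01 · j) hii (hbip2 j) I L
  simp only [Set.mem_insert_iff, Set.mem_singleton_iff] at h1 h2 ⊢
  omega

/-- with `A` the node-edge incidence matrix of a finite simple bipartite graph
with bipartition `(R1, R2)` and `H` satisfying (i), (ii) and `|supp(h_l)| ≥ 2`, for all
`I ⊆ [m1]` and `L ⊆ [m2]` the vector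
`(Σ_{i∈R1∩I} a_i + Σ_{l∈L(R1\I)} h_l − Σ_{l∈L(R1∩I)} h_l)
 − (Σ_{i∈R2∩I} a_i + Σ_{l∈L(R2\I)} h_l − Σ_{l∈L(R2∩I)} h_l)`
has all entries in `{0, 1, −1}`. -/
theorem stmt12 (m1 m2 n1 : ℕ)
    (A : Matrix (Fin m1) (Fin n1) ℤ) (H : Matrix (Fin m2) (Fin n1) ℤ)
    (R1 R2 : Finset (Fin m1))
    (hdisj : Disjoint R1 R2) (hcover : R1 ∪ R2 = Finset.univ)
    (hA01 : ∀ i e, A i e = 0 ∨ A i e = 1)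
    (hH01 : ∀ l j, H l j = 0 ∨ H l j = 1)
    (hbip1 : ∀ e, ∃! i, i ∈ R1 ∧ A i e = 1)
    (hbip2 : ∀ e, ∃! i, i ∈ R2 ∧ A i e = 1)
    (hsimple : ∀ e e' : Fin n1, (∀ i, A i e = A i e') → e = e')
    (hi : ∀ l, ∃ i, {j | H l j ≠ 0} ⊆ {j | A i j ≠ 0})
    (hii : ∀ l l', l ≠ l' →
        (∃ i, {j | H l j ≠ 0} ∪ {j | H l' j ≠ 0} ⊆ {j | A i j ≠ 0}) →
        {j | H l j ≠ 0} ∩ {j | H l' j ≠ 0} = ∅)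
    (hsupp2 : ∀ l, 2 ≤ {j | H l j ≠ 0}.ncard)
    (I : Finset (Fin m1)) (L : Finset (Fin m2)) :
    ∀ j : Fin n1,
      (((∑ i ∈ R1 ∩ I, A i j) + (∑ l ∈ LofR A H L (R1 \ I), H l j)
          - ∑ l ∈ LofR A H L (R1 ∩ I), H l j)
        - ((∑ i ∈ R2 ∩ I, A i j) + (∑ l ∈ LofR A H L (R2 \ I), H l j)
          - ∑ l ∈ LofR A H L (R2 ∩ I), H l j)) ∈ ({0, 1, -1} : Set ℤ) :=
  stmt12_general m1 m2 n1 A H R1 R2 hA01 hH01 hbip1 hbip2 hii I L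
end
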